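/- arXiv:2407.10073 — 14 statements merged into one kernel-verified Lean document; each statement's English description precedes it below -/
import Mathlib

section
/- Let χ ∈ [0,1) and ε̄ > 0 with 4M_f² + ε̄L_f > 0, and suppose the stepsize λ satisfies 0 < λ ≤ (1−χ)²ε̄ / (4M_f² + ε̄L_f). Let x̂ ∈ dom h and let x be a minimizer over ℝⁿ of u ↦ ℓ_f(u; x̂) + h(u) + ‖u − x̂‖²/(2λ). Then f(x) − ℓ_f(x; x̂) − ((1−χ)/(2λ))‖x − x̂‖² ≤ (1−χ)ε̄/2. -/
open scoped RealInnerProductSpace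

private lemma ucs_aux_gauss (M : ℕ) :
    ∑ k ∈ Finset.range M, ((k:ℝ)+1) = (M:ℝ)*((M:ℝ)+1)/2 := by
  induction M with
  | zero => simp
  | succ m ih =>
    rw [Finset.sum_range_succ, ih]
    push_cast
    ring

set_option maxHeartbeats 1600000 in
/-- Lemma `lem:lam`: if the stepsize `lam` is small enough, the point
`x` computed as the minimizer of the composite-subgradient prox subproblem satisfies the
line-search test of step 2 of U-CS. -/
theorem ucs_stepsize_test
    {n : ℕ} (f h : EuclideanSpace ℝ (Fin n) → ℝ)
    (domf domh : Set (EuclideanSpace ℝ (Fin n)))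
    (f' : EuclideanSpace ℝ (Fin n) → EuclideanSpace ℝ (Fin n))
    (Mf Lf : ℝ) (hMf : 0 ≤ Mf) (hLf : 0 ≤ Lf)
    (hsub : domh ⊆ domf)
    (hfconv : ConvexOn ℝ domf f) (hhconv : ConvexOn ℝ domh h)
    (hflsc : LowerSemicontinuousOn f domf) (hhlsc : LowerSemicontinuousOn h domh)
    (horacle : ∀ x ∈ domh, ∀ u ∈ domf, f x + ⟪f' x, u - x⟫ ≤ f u)
    (hhybrid : ∀ x ∈ domh, ∀ y ∈ domh, ‖f' x - f' y‖ ≤ 2 * Mf + Lf * ‖x - y‖)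
    (χ ε lam : ℝ)
    (hχ0 : 0 ≤ χ) (hχ1 : χ < 1) (hε : 0 < ε)
    (hden : 0 < 4 * Mf ^ 2 + ε * Lf)
    (hlam0 : 0 < lam) (hlam : lam ≤ (1 - χ) ^ 2 * ε / (4 * Mf ^ 2 + ε * Lf))
    (xhat x : EuclideanSpace ℝ (Fin n))
    (hxhat : xhat ∈ domh) (hx : x ∈ domh)
    (hmin : ∀ u ∈ domh,
      f xhat + ⟪f' xhat, x - xhat⟫ + h x + ‖x - xhat‖ ^ 2 / (2 * lam)
        ≤ f xhat + ⟪f' xhat, u - xhat⟫ + h u + ‖u - xhat‖ ^ 2 / (2 * lam)) :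
    f x - (f xhat + ⟪f' xhat, x - xhat⟫) - (1 - χ) / (2 * lam) * ‖x - xhat‖ ^ 2
      ≤ (1 - χ) * ε / 2 := by
  set t := ‖x - xhat‖ with ht
  have ht0 : 0 ≤ t := norm_nonneg _
  have hconvS : Convex ℝ domh := hhconv.1
  set a : ℝ := 1 - χ with ha
  clear_value t a
  have ha0 : 0 < a := by simp [ha]; linarith
  have ha1 : a ≤ 1 := by simp [ha]; linarith
  -- Step 1: the key descent-type estimate along the segment
  have key : ∀ M : ℕ, 0 < M →
      f x - f xhat - ⟪f' xhat, x - xhat⟫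
        ≤ 2*Mf*t + Lf*t^2/2 + Lf*t^2/(2*(M:ℝ)) := by
    intro M hM
    have hMr : (0:ℝ) < (M:ℝ) := by exact_mod_cast hM
    set c : ℕ → EuclideanSpace ℝ (Fin n) :=
      fun k => xhat + ((k:ℝ)/(M:ℝ)) • (x - xhat) with hc
    have hmem : ∀ k, k ≤ M → c k ∈ domh := by
      intro k hk
      refine hconvS.add_smul_sub_mem hxhat hx ⟨div_nonneg (Nat.cast_nonneg k) hMr.le, ?_⟩
      rw [div_le_one hMr]
      exact_mod_cast hk
    have hdiff : ∀ k : ℕ, c (k+1) - c k = ((1:ℝ)/(M:ℝ)) • (x - xhat) := by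
      intro k
      simp only [hc, add_sub_add_left_eq_sub, ← sub_smul]
      congr 1
      push_cast
      field_simp
      ring
    have hdiffhat : ∀ k : ℕ, c (k+1) - xhat = (((k:ℝ)+1)/(M:ℝ)) • (x - xhat) := by
      intro k
      simp only [hc, add_sub_cancel_left]
      norm_num
    have hstep : ∀ k, k < M →
        (f (c (k+1)) - ⟪f' xhat, c (k+1)⟫) - (f (c k) - ⟪f' xhat, c k⟫)
          ≤ 2*Mf*t/(M:ℝ) + Lf*((k:ℝ)+1)*t^2/(M:ℝ)^2 := by
      intro k hk
      have hk1 : k + 1 ≤ M := hk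
      have hmem1 : c (k+1) ∈ domh := hmem (k+1) hk1
      have hmem0 : c k ∈ domh := hmem k (le_of_lt hk)
      have horc := horacle (c (k+1)) hmem1 (c k) (hsub hmem0)
      have h1 : f (c (k+1)) - f (c k) ≤ ⟪f' (c (k+1)), c (k+1) - c k⟫ := by
        have hneg : (⟪f' (c (k+1)), c k - c (k+1)⟫ : ℝ)
            = - ⟪f' (c (k+1)), c (k+1) - c k⟫ := by
          rw [← inner_neg_right]; congr 1; abel
        rw [hneg] at horc
        linarith
      have h2 : (f (c (k+1)) - ⟪f' xhat, c (k+1)⟫) - (f (c k) - ⟪f' xhat, c k⟫)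
          ≤ ⟪f' (c (k+1)) - f' xhat, c (k+1) - c k⟫ := by
        rw [inner_sub_left, inner_sub_right]
        have := h1
        rw [inner_sub_right] at this ⊢
        linarith
      have h3 : ⟪f' (c (k+1)) - f' xhat, c (k+1) - c k⟫
          ≤ ‖f' (c (k+1)) - f' xhat‖ * ‖c (k+1) - c k‖ := real_inner_le_norm _ _
      have hnd : ‖c (k+1) - c k‖ = t / (M:ℝ) := by
        rw [hdiff k, norm_smul, Real.norm_eq_abs, abs_of_pos (by positivity : (0:ℝ) < 1/(M:ℝ))]
        rw [← ht]; ring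
      have hnh : ‖c (k+1) - xhat‖ = (((k:ℝ)+1)/(M:ℝ)) * t := by
        rw [hdiffhat k, norm_smul, Real.norm_eq_abs,
          abs_of_pos (by positivity : (0:ℝ) < ((k:ℝ)+1)/(M:ℝ)), ← ht]
      have h4 : ‖f' (c (k+1)) - f' xhat‖ ≤ 2*Mf + Lf * ((((k:ℝ)+1)/(M:ℝ)) * t) := by
        have := hhybrid (c (k+1)) hmem1 xhat hxhat
        rwa [hnh] at this
      have h5 : ‖f' (c (k+1)) - f' xhat‖ * ‖c (k+1) - c k‖
          ≤ (2*Mf + Lf * ((((k:ℝ)+1)/(M:ℝ)) * t)) * (t/(M:ℝ)) := by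
        rw [hnd]
        exact mul_le_mul_of_nonneg_right h4 (by positivity)
      have heq : (2*Mf + Lf * ((((k:ℝ)+1)/(M:ℝ)) * t)) * (t/(M:ℝ))
          = 2*Mf*t/(M:ℝ) + Lf*((k:ℝ)+1)*t^2/(M:ℝ)^2 := by
        field_simp
      linarith [h2, h3, h5.trans_eq heq]
    have htel : ∑ k ∈ Finset.range M,
        ((f (c (k+1)) - ⟪f' xhat, c (k+1)⟫) - (f (c k) - ⟪f' xhat, c k⟫))
        = (f (c M) - ⟪f' xhat, c M⟫) - (f (c 0) - ⟪f' xhat, c 0⟫) :=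
      Finset.sum_range_sub (fun k => f (c k) - ⟪f' xhat, c k⟫) M
    have hc0 : c 0 = xhat := by simp [hc]
    have hcM : c M = x := by
      simp only [hc, div_self hMr.ne', one_smul]
      abel
    have hsum : ∑ k ∈ Finset.range M, (2*Mf*t/(M:ℝ) + Lf*((k:ℝ)+1)*t^2/(M:ℝ)^2)
        = 2*Mf*t + Lf*t^2*((M:ℝ)+1)/(2*(M:ℝ)) := by
      have hre : ∀ k ∈ Finset.range M, 2*Mf*t/(M:ℝ) + Lf*((k:ℝ)+1)*t^2/(M:ℝ)^2
          = 2*Mf*t/(M:ℝ) + (Lf*t^2/(M:ℝ)^2) * ((k:ℝ)+1) := by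
        intro k _; ring
      rw [Finset.sum_congr rfl hre, Finset.sum_add_distrib, Finset.sum_const,
        Finset.card_range, ← Finset.mul_sum, ucs_aux_gauss, nsmul_eq_mul]
      field_simp
    have hboundsum : ∑ k ∈ Finset.range M,
        ((f (c (k+1)) - ⟪f' xhat, c (k+1)⟫) - (f (c k) - ⟪f' xhat, c k⟫))
        ≤ 2*Mf*t + Lf*t^2*((M:ℝ)+1)/(2*(M:ℝ)) := by
      rw [← hsum]
      exact Finset.sum_le_sum (fun k hk => hstep k (Finset.mem_range.mp hk))
    rw [htel, hc0, hcM] at hboundsum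
    have hinner : ⟪f' xhat, x - xhat⟫ = ⟪f' xhat, x⟫ - ⟪f' xhat, xhat⟫ :=
      inner_sub_right _ _ _
    have hfrac : Lf*t^2*((M:ℝ)+1)/(2*(M:ℝ)) = Lf*t^2/2 + Lf*t^2/(2*(M:ℝ)) := by
      field_simp
    rw [hfrac] at hboundsum
    linarith
  -- Step 2: pass to the limit in M
  have step1 : f x - f xhat - ⟪f' xhat, x - xhat⟫ ≤ 2*Mf*t + Lf*t^2/2 := by
    apply le_of_forall_pos_le_add
    intro δ hδ
    obtain ⟨N, hN⟩ := exists_nat_gt (Lf*t^2/(2*δ))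
    have hN1 : 0 < N + 1 := Nat.succ_pos N
    have hNr : (0:ℝ) < (N:ℝ) + 1 := by positivity
    have hNN : Lf*t^2/(2*((N+1:ℕ):ℝ)) ≤ δ := by
      push_cast
      rw [div_le_iff₀ (by positivity)]
      have h0 : 0 ≤ Lf*t^2/(2*δ) := by positivity
      have : Lf*t^2 < 2*δ*(N:ℝ) + 2*δ := by
        have := (div_lt_iff₀ (by positivity : (0:ℝ) < 2*δ)).mp hN
        nlinarith
      nlinarith
    have := key (N+1) hN1
    linarith
  -- Step 3: the quadratic inequality from the stepsize bound
  have hD : lam * (4 * Mf ^ 2 + ε * Lf) ≤ a^2 * ε :=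
    (le_div_iff₀ hden).mp hlam
  have hP : 4*lam*Mf*t + lam*Lf*t^2 ≤ a*t^2 + lam*(a*ε) := by
    have hDt : lam * (4 * Mf ^ 2 + ε * Lf) * t^2 ≤ a^2 * ε * t^2 :=
      mul_le_mul_of_nonneg_right hD (sq_nonneg t)
    nlinarith [mul_nonneg hlam0.le (sq_nonneg (2*Mf*t - a*ε)),
      mul_nonneg (mul_nonneg hlam0.le hLf)
        (mul_nonneg (mul_nonneg hε.le (by linarith : (0:ℝ) ≤ 1 - a)) (sq_nonneg t)),
      mul_pos ha0 hε, sq_nonneg t, mul_pos hlam0 hε]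
  have h2l : (0:ℝ) < 2*lam := by linarith
  have hq : 2*Mf*t + Lf*t^2/2 - a/(2*lam)*t^2 ≤ a*ε/2 := by
    have hL : 2*Mf*t + Lf*t^2/2 = (4*lam*Mf*t + lam*Lf*t^2)/(2*lam) := by
      field_simp; ring
    have hR : a*ε/2 + a/(2*lam)*t^2 = (a*t^2 + lam*(a*ε))/(2*lam) := by
      field_simp; ring
    rw [sub_le_iff_le_add, hL, hR]
    exact div_le_div_of_nonneg_right hP h2l.le
  linarith [step1, hq]
end

section
/- Assume in addition that φ is μ-convex and Γ is ν-convex with 0 ≤ ν ≤ μ. Then for every u ∈ dom φ, 2λ[φ(y) − φ(u)] ≤ 2λε/(1−χ) + ‖x⁻ − u‖² − (1+σ)‖x − u‖², where σ := λ[ν(1+μλ) + χ(μ−ν)] / (1 + μλ + χλ(ν−μ)). -/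
open scoped RealInnerProductSpace

lemma combo3 {n : ℕ} (a b c : EuclideanSpace ℝ (Fin n)) (t : ℝ) :
    ‖t • a + (1 - t) • b - c‖ ^ 2
      = t * ‖a - c‖ ^ 2 + (1 - t) * ‖b - c‖ ^ 2 - t * (1 - t) * ‖a - b‖ ^ 2 := by
  simp only [← real_inner_self_eq_norm_sq, inner_add_left, inner_add_right,
    inner_sub_left, inner_sub_right, real_inner_smul_left, real_inner_smul_right]
  rw [real_inner_comm c a, real_inner_comm c b, real_inner_comm b a]
  ring

lemma core_ineq {n : ℕ} (a b : EuclideanSpace ℝ (Fin n)) (c₁ c₂ : ℝ) :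
    c₁ * c₂ * ‖a - b‖ ^ 2 ≤ (c₁ + c₂) * (c₁ * ‖a‖ ^ 2 + c₂ * ‖b‖ ^ 2) := by
  have hpos : (0:ℝ) ≤ ‖c₁ • a + c₂ • b‖ ^ 2 := sq_nonneg _
  have e1 : ‖c₁ • a + c₂ • b‖ ^ 2
      = c₁ ^ 2 * ‖a‖ ^ 2 + 2 * (c₁ * c₂) * inner ℝ a b + c₂ ^ 2 * ‖b‖ ^ 2 := by
    simp only [← real_inner_self_eq_norm_sq, inner_add_left, inner_add_right,
      real_inner_smul_left, real_inner_smul_right]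
    rw [real_inner_comm b a]; ring
  have e2 : ‖a - b‖ ^ 2 = ‖a‖ ^ 2 - 2 * inner ℝ a b + ‖b‖ ^ 2 := by
    simp only [← real_inner_self_eq_norm_sq, inner_sub_left, inner_sub_right]
    rw [real_inner_comm b a]; ring
  rw [e1] at hpos
  rw [e2]
  nlinarith [hpos]

lemma limit_aux {A S : ℝ} (h : ∀ α : ℝ, 0 < α → α ≤ 1 → A ≤ α * S) : A ≤ 0 := by
  by_contra hc
  push_neg at hc
  have h1 := h 1 one_pos le_rfl
  have hS' : 0 < S := lt_of_lt_of_le hc (by linarith)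
  have h2 := h (A / (2 * S)) (by positivity) (by rw [div_le_one (by positivity)]; linarith)
  have h3 : A / (2 * S) * S = A / 2 := by field_simp
  rw [h3] at h2
  linarith

set_option maxHeartbeats 1000000 in
/-- Proposition `propouter`: the key contraction inequality for the
black-box BB, when `φ` is `μ`-convex and the bundle `Γ` is `ν`-convex with `0 ≤ ν ≤ μ`. -/
theorem bb_contraction
    {n : ℕ} (φ Γ : EuclideanSpace ℝ (Fin n) → ℝ)
    (domφ domΓ : Set (EuclideanSpace ℝ (Fin n)))
    (μ ν : ℝ) (hν0 : 0 ≤ ν) (hνμ : ν ≤ μ)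
    (hdom : domφ ⊆ domΓ)
    (hφconv : ConvexOn ℝ domφ φ) (hΓconv : ConvexOn ℝ domΓ Γ)
    (hφlsc : LowerSemicontinuousOn φ domφ) (hΓlsc : LowerSemicontinuousOn Γ domΓ)
    (hφμ : ∀ a ∈ domφ, ∀ b ∈ domφ, ∀ α : ℝ, 0 ≤ α → α ≤ 1 →
      φ (α • a + (1 - α) • b) ≤ α * φ a + (1 - α) * φ b - α * (1 - α) * μ / 2 * ‖a - b‖ ^ 2)
    (hΓν : ∀ a ∈ domΓ, ∀ b ∈ domΓ, ∀ α : ℝ, 0 ≤ α → α ≤ 1 →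
      Γ (α • a + (1 - α) • b) ≤ α * Γ a + (1 - α) * Γ b - α * (1 - α) * ν / 2 * ‖a - b‖ ^ 2)
    (hΓφ : ∀ u ∈ domφ, Γ u ≤ φ u)
    (χ ε lam : ℝ) (hχ0 : 0 ≤ χ) (hχ1 : χ < 1) (hε : 0 < ε) (hlam : 0 < lam)
    (xm : EuclideanSpace ℝ (Fin n)) (hxm : xm ∈ domφ)
    (x : EuclideanSpace ℝ (Fin n)) (hx : x ∈ domΓ)
    (hxmin : ∀ u ∈ domΓ, Γ x + ‖x - xm‖ ^ 2 / (2 * lam) ≤ Γ u + ‖u - xm‖ ^ 2 / (2 * lam))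
    (y : EuclideanSpace ℝ (Fin n)) (hy : y ∈ domφ)
    (hy2 : φ y + χ / (2 * lam) * ‖y - xm‖ ^ 2 - (Γ x + ‖x - xm‖ ^ 2 / (2 * lam)) ≤ ε) :
    ∀ u ∈ domφ,
      2 * lam * (φ y - φ u) ≤ 2 * lam * ε / (1 - χ) + ‖xm - u‖ ^ 2
        - (1 + lam * (ν * (1 + μ * lam) + χ * (μ - ν)) / (1 + μ * lam + χ * lam * (ν - μ)))
          * ‖x - u‖ ^ 2 := by
  intro u hu
  have h2l : (0:ℝ) < 2 * lam := by linarith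
  have hlne : lam ≠ 0 := ne_of_gt hlam
  have h1χ : (0:ℝ) < 1 - χ := by linarith
  have hD : (0:ℝ) < 1 + μ * lam + χ * lam * (ν - μ) := by
    nlinarith [mul_nonneg (le_of_lt h1χ) (mul_nonneg hlam.le (by linarith : (0:ℝ) ≤ μ - ν)),
      mul_nonneg hν0 hlam.le]
  have mulsimp : ∀ r s : ℝ, 2 * lam * (r + s / (2 * lam)) = 2 * lam * r + s := by
    intro r s; field_simp
  -- Step 1: strong proximal inequality
  have keyP : ∀ v ∈ domΓ, 2 * lam * Γ x + ‖x - xm‖ ^ 2 + (1 + lam * ν) * ‖v - x‖ ^ 2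
      ≤ 2 * lam * Γ v + ‖v - xm‖ ^ 2 := by
    intro v hv
    have hstep : ∀ α : ℝ, 0 < α → α ≤ 1 →
        (2 * lam * Γ x + ‖x - xm‖ ^ 2 + (1 + lam * ν) * ‖v - x‖ ^ 2
          - (2 * lam * Γ v + ‖v - xm‖ ^ 2)) ≤ α * ((1 + lam * ν) * ‖v - x‖ ^ 2) := by
      intro α hα hα1
      have hw : α • v + (1 - α) • x ∈ domΓ :=
        hΓconv.1 hv hx hα.le (by linarith) (by ring)
      have hmin' := mul_le_mul_of_nonneg_left (hxmin (α • v + (1 - α) • x) hw) h2l.le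
      rw [mulsimp, mulsimp] at hmin'
      have hcv := mul_le_mul_of_nonneg_left (hΓν v hv x hx α hα.le hα1) h2l.le
      have hcb := combo3 v x xm α
      have hmul : α * ((2 * lam * Γ x + ‖x - xm‖ ^ 2 + (1 + lam * ν) * ‖v - x‖ ^ 2
          - (2 * lam * Γ v + ‖v - xm‖ ^ 2)) - α * ((1 + lam * ν) * ‖v - x‖ ^ 2)) ≤ α * 0 := by
        nlinarith [hmin', hcv, hcb]
      have := le_of_mul_le_mul_left hmul hα
      linarith
    have := limit_aux hstep
    linarith
  -- Step 2: the interpolated point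
  have hut : (1 - χ) • u + (1 - (1 - χ)) • y ∈ domφ :=
    hφconv.1 hu hy (by linarith) (by linarith) (by ring)
  have S2 := keyP ((1 - χ) • u + (1 - (1 - χ)) • y) (hdom hut)
  have E1 := combo3 u y xm (1 - χ)
  have E2 := combo3 u y x (1 - χ)
  rw [E1, E2, norm_sub_rev u x, norm_sub_rev y x] at S2
  have S3 := mul_le_mul_of_nonneg_left (hΓφ _ hut) h2l.le
  have S4 := mul_le_mul_of_nonneg_left
    (hφμ u hu y hy (1 - χ) (by linarith) (by linarith)) h2l.le
  -- S1 : hy2 cleared of denominators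
  have eS1 : 2 * lam * (φ y + χ / (2 * lam) * ‖y - xm‖ ^ 2 - (Γ x + ‖x - xm‖ ^ 2 / (2 * lam)))
      = 2 * lam * φ y + χ * ‖y - xm‖ ^ 2 - 2 * lam * Γ x - ‖x - xm‖ ^ 2 := by
    field_simp; ring
  have S1 := mul_le_mul_of_nonneg_left hy2 h2l.le
  rw [eS1] at S1
  -- master inequality
  have hM : 2 * lam * (1 - χ) * (φ y - φ u)
      ≤ 2 * lam * ε + (1 - χ) * ‖u - xm‖ ^ 2
        - (1 - χ) * (1 + ν * lam) * ‖x - u‖ ^ 2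
        - χ * (1 + ν * lam) * ‖x - y‖ ^ 2
        - (1 - χ) * χ * lam * (μ - ν) * ‖u - y‖ ^ 2 := by
    linarith [S1, S2, S3, S4]
  -- the geometric inequality
  have hN : (1 - χ) * χ * lam * (μ - ν) * (1 + ν * lam) * ‖x - u‖ ^ 2
      ≤ (1 + μ * lam + χ * lam * (ν - μ)) * (χ * (1 + ν * lam) * ‖x - y‖ ^ 2)
        + (1 + μ * lam + χ * lam * (ν - μ)) * ((1 - χ) * χ * lam * (μ - ν) * ‖u - y‖ ^ 2) := by
    rcases eq_or_lt_of_le hχ0 with hχ | hχ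
    · rw [← hχ]; linarith
    · have hc := core_ineq (x - y) (u - y) (χ * (1 + ν * lam)) (χ * ((1 - χ) * lam * (μ - ν)))
      rw [sub_sub_sub_cancel_right] at hc
      have h2 : χ * ((1 - χ) * χ * lam * (μ - ν) * (1 + ν * lam) * ‖x - u‖ ^ 2)
          ≤ χ * ((1 + μ * lam + χ * lam * (ν - μ)) * (χ * (1 + ν * lam) * ‖x - y‖ ^ 2)
            + (1 + μ * lam + χ * lam * (ν - μ)) * ((1 - χ) * χ * lam * (μ - ν) * ‖u - y‖ ^ 2)) := by
        nlinarith [hc]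
      exact le_of_mul_le_mul_left h2 hχ
  have hMD := mul_le_mul_of_nonneg_left hM hD.le
  -- finish
  rw [show ‖xm - u‖ = ‖u - xm‖ from norm_sub_rev _ _]
  have hpos : (0:ℝ) < (1 - χ) * (1 + μ * lam + χ * lam * (ν - μ)) := mul_pos h1χ hD
  have hre : (2 * lam * ε / (1 - χ) + ‖u - xm‖ ^ 2
        - (1 + lam * (ν * (1 + μ * lam) + χ * (μ - ν)) / (1 + μ * lam + χ * lam * (ν - μ)))
          * ‖x - u‖ ^ 2) * ((1 - χ) * (1 + μ * lam + χ * lam * (ν - μ)))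
      = 2 * lam * ε * (1 + μ * lam + χ * lam * (ν - μ))
        + (1 - χ) * (1 + μ * lam + χ * lam * (ν - μ)) * ‖u - xm‖ ^ 2
        - ((1 - χ) * (1 + μ * lam + χ * lam * (ν - μ))
            + (1 - χ) * lam * (ν * (1 + μ * lam) + χ * (μ - ν))) * ‖x - u‖ ^ 2 := by
    have hD' := hD.ne'
    have h1' := h1χ.ne'
    generalize 1 + μ * lam + χ * lam * (ν - μ) = D at hD' ⊢
    field_simp
  refine le_of_mul_le_mul_right ?_ hpos
  rw [hre]
  linarith [hMD, hN]
end

section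
/- Define s := (x⁻ − x)/λ and η := φ(y) − Γ(x) − ⟨s, y − x⟩. Then: (a) s ∈ ∂Γ(x), i.e., Γ(u) ≥ Γ(x) + ⟨s, u − x⟩ for every u ∈ ℝⁿ; and (b) s ∈ ∂_η φ(y), i.e., φ(u) ≥ φ(y) + ⟨s, u − y⟩ − η for every u ∈ ℝⁿ, and moreover 0 ≤ 2λη ≤ 2λε − ‖y − x‖² + (1−χ)‖y − x⁻‖². -/
open scoped RealInnerProductSpace

/-- Lemma `lemetab`: with `s := (x⁻ − x)/λ` and
`η := φ(y) − Γ(x) − ⟨s, y − x⟩`, one has (a) `s ∈ ∂Γ(x)`, and (b) `s ∈ ∂_η φ(y)` together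
with `0 ≤ 2λη ≤ 2λε − ‖y − x‖² + (1−χ)‖y − x⁻‖²`. -/
theorem bb_subgradient_lemma
    {n : ℕ} (φ Γ : EuclideanSpace ℝ (Fin n) → ℝ)
    (domφ domΓ : Set (EuclideanSpace ℝ (Fin n)))
    (hdom : domφ ⊆ domΓ)
    (hφconv : ConvexOn ℝ domφ φ) (hΓconv : ConvexOn ℝ domΓ Γ)
    (hφlsc : LowerSemicontinuousOn φ domφ) (hΓlsc : LowerSemicontinuousOn Γ domΓ)
    (hΓφ : ∀ u ∈ domφ, Γ u ≤ φ u)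
    (χ ε lam : ℝ) (hχ0 : 0 ≤ χ) (hχ1 : χ < 1) (hε : 0 < ε) (hlam : 0 < lam)
    (xm : EuclideanSpace ℝ (Fin n)) (hxm : xm ∈ domφ)
    (x : EuclideanSpace ℝ (Fin n)) (hx : x ∈ domΓ)
    (hxmin : ∀ u ∈ domΓ, Γ x + ‖x - xm‖ ^ 2 / (2 * lam) ≤ Γ u + ‖u - xm‖ ^ 2 / (2 * lam))
    (y : EuclideanSpace ℝ (Fin n)) (hy : y ∈ domφ)
    (hy2 : φ y + χ / (2 * lam) * ‖y - xm‖ ^ 2 - (Γ x + ‖x - xm‖ ^ 2 / (2 * lam)) ≤ ε)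
    (s : EuclideanSpace ℝ (Fin n)) (hs : s = (1 / lam) • (xm - x))
    (η : ℝ) (hη : η = φ y - Γ x - ⟪s, y - x⟫) :
    (∀ u ∈ domΓ, Γ x + ⟪s, u - x⟫ ≤ Γ u) ∧
    (∀ u ∈ domφ, φ y + ⟪s, u - y⟫ - η ≤ φ u) ∧
    0 ≤ 2 * lam * η ∧
    2 * lam * η ≤ 2 * lam * ε - ‖y - x‖ ^ 2 + (1 - χ) * ‖y - xm‖ ^ 2 := by
  have hlam' : (0:ℝ) < 2 * lam := by linarith
  have hlamne : lam ≠ 0 := ne_of_gt hlam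
  -- inner product of s with any vector v
  have hinner : ∀ v : EuclideanSpace ℝ (Fin n), ⟪s, v⟫ = (1 / lam) * ⟪xm - x, v⟫ := by
    intro v; rw [hs, real_inner_smul_left]
  -- Part (a)
  have ha : ∀ u ∈ domΓ, Γ x + ⟪s, u - x⟫ ≤ Γ u := by
    intro u hu
    set B : ℝ := ⟪x - xm, u - x⟫ with hB
    set C : ℝ := ‖u - x‖ ^ 2 with hC
    have hC0 : 0 ≤ C := by positivity
    have hkey : ∀ t : ℝ, 0 < t → t ≤ 1 →
        2 * lam * Γ x ≤ 2 * lam * Γ u + 2 * B + t * C := by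
      intro t ht0 ht1
      set xt := (1 - t) • x + t • u with hxt
      have hxtmem : xt ∈ domΓ := hΓconv.1 hx hu (by linarith) ht0.le (by ring)
      have h1 : Γ xt ≤ (1 - t) * Γ x + t * Γ u := hΓconv.2 hx hu (by linarith) ht0.le (by ring)
      have h2 : xt - xm = (x - xm) + t • (u - x) := by
        rw [hxt, sub_smul, one_smul, smul_sub]
        abel
      have h3 : ‖xt - xm‖ ^ 2 = ‖x - xm‖ ^ 2 + 2 * (t * B) + t ^ 2 * C := by
        rw [h2, @norm_add_sq_real, real_inner_smul_right, norm_smul, hB, hC]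
        rw [Real.norm_eq_abs, abs_of_pos ht0]
        ring
      have h4 := hxmin xt hxtmem
      rw [h3] at h4
      have h4' : 2 * lam * Γ x + ‖x - xm‖ ^ 2 ≤
          2 * lam * Γ xt + (‖x - xm‖ ^ 2 + 2 * (t * B) + t ^ 2 * C) := by
        have := mul_le_mul_of_nonneg_left h4 hlam'.le
        rw [mul_add, mul_add, mul_div_cancel₀ _ (ne_of_gt hlam'),
          mul_div_cancel₀ _ (ne_of_gt hlam')] at this
        linarith
      -- t * (2λ Γ x) ≤ t * (2λ Γ u + 2B + tC)
      have h5 : t * (2 * lam * Γ x) ≤ t * (2 * lam * Γ u + 2 * B + t * C) := by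
        nlinarith [h4', h1, hlam']
      have := le_of_mul_le_mul_left h5 ht0
      linarith
    have hle : 2 * lam * Γ x ≤ 2 * lam * Γ u + 2 * B := by
      refine le_of_forall_pos_le_add fun δ hδ => ?_
      have ht0 : 0 < min 1 (δ / (C + 1)) := by
        apply lt_min one_pos; positivity
      have ht1 : min 1 (δ / (C + 1)) ≤ 1 := min_le_left _ _
      have h := hkey _ ht0 ht1
      have htc : min 1 (δ / (C + 1)) * C ≤ δ := by
        have h1 : min 1 (δ / (C + 1)) ≤ δ / (C + 1) := min_le_right _ _
        have h2 : min 1 (δ / (C + 1)) * C ≤ (δ / (C + 1)) * C :=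
          mul_le_mul_of_nonneg_right h1 hC0
        have h3 : (δ / (C + 1)) * C ≤ (δ / (C + 1)) * (C + 1) := by
          apply mul_le_mul_of_nonneg_left (by linarith) (by positivity)
        rw [div_mul_cancel₀ _ (by positivity : C + 1 ≠ 0)] at h3
        linarith
      linarith
    have hBs : ⟪s, u - x⟫ = (1 / lam) * (-B) := by
      rw [hinner, hB, show xm - x = -(x - xm) by abel, inner_neg_left]
    rw [hBs]
    have h7 : (2 * lam) * (Γ x + 1 / lam * (-B)) = 2 * lam * Γ x - 2 * B := by
      field_simp; ring
    have h6 : (2 * lam) * (Γ x + 1 / lam * (-B)) ≤ (2 * lam) * Γ u := by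
      rw [h7]; linarith
    exact le_of_mul_le_mul_left h6 hlam'
  refine ⟨ha, ?_, ?_, ?_⟩
  · -- Part (b): s ∈ ∂_η φ(y)
    intro u hu
    have h1 := ha u (hdom hu)
    have h2 := hΓφ u hu
    have h3 : ⟪s, u - y⟫ + ⟪s, y - x⟫ = ⟪s, u - x⟫ := by
      rw [← inner_add_right, show (u - y) + (y - x) = u - x by abel]
    rw [hη]; linarith
  · -- η ≥ 0
    have h1 := ha y (hdom hy)
    have h2 := hΓφ y hy
    have hη0 : 0 ≤ η := by rw [hη]; linarith
    positivity
  · -- upper bound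
    have hid : 2 * ⟪xm - x, y - x⟫ = ‖y - x‖ ^ 2 + ‖xm - x‖ ^ 2 - ‖y - xm‖ ^ 2 := by
      have := @norm_sub_sq_real (EuclideanSpace ℝ (Fin n)) _ _ (y - x) (xm - x)
      rw [show (y - x) - (xm - x) = y - xm by abel] at this
      rw [real_inner_comm]
      linarith
    have hnxm : ‖xm - x‖ = ‖x - xm‖ := norm_sub_rev _ _
    have hsy : 2 * lam * ⟪s, y - x⟫ = 2 * ⟪xm - x, y - x⟫ := by
      rw [hinner]; field_simp
    have hy2' : 2 * lam * (φ y) + χ * ‖y - xm‖ ^ 2 - 2 * lam * Γ x - ‖x - xm‖ ^ 2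
        ≤ 2 * lam * ε := by
      have := mul_le_mul_of_nonneg_left hy2 hlam'.le
      rw [mul_sub, mul_add, mul_add, mul_div_cancel₀ _ (ne_of_gt hlam')] at this
      have hχ : 2 * lam * (χ / (2 * lam) * ‖y - xm‖ ^ 2) = χ * ‖y - xm‖ ^ 2 := by
        field_simp
      rw [hχ] at this
      linarith
    have heq : 2 * lam * η = 2 * lam * (φ y) - 2 * lam * Γ x
        - (‖y - x‖ ^ 2 + ‖x - xm‖ ^ 2 - ‖y - xm‖ ^ 2) := by
      rw [hη, mul_sub, mul_sub, hsy, hid, hnxm]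
    rw [heq]
    nlinarith [hy2']
end

section
/- Define s := (x⁻ − x)/λ and η := φ(y) − Γ(x) − ⟨s, y − x⟩. Assume in addition that φ is μ-convex and Γ is ν-convex with 0 ≤ ν ≤ μ. Then for every ζ ∈ [0,1) and every u ∈ dom φ: φ(u) ≥ φ(y) + ⟨s, u − y⟩ + (ζ(μ−ν)/2)‖u − y‖² − η/(1−ζ) + (ζ/(1−ζ))·(ν/2)‖y − x‖² + (ν/2)‖u − x‖². -/
open scoped RealInnerProductSpace

private lemma bb_key (Gx Gw Gz A N ν α t : ℝ) (hα0 : 0 < α)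
    (h1 : 0 ≤ Gz - Gx + (2*(α*A) + α^2*N)*t)
    (h2 : Gz ≤ α*Gw + (1-α)*Gx - α*(1-α)*ν/2*N) :
    Gx - 2*t*A + ν/2*N ≤ Gw + α*((ν/2 + t)*N) := by
  nlinarith [h1, h2, hα0]

private lemma bb_alg (fy fu Gx Gz fz P Q R a b c d μ ν ζ : ℝ) (hζ1 : ζ < 1)
    (hc : c = b - 2*R + a) (hd : d = ζ^2*a + 2*(ζ*(1-ζ)*R) + (1-ζ)^2*b)
    (hμ : fz ≤ ζ*fy + (1-ζ)*fu - ζ*(1-ζ)*μ/2*c)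
    (hΓ : Gz ≤ fz)
    (hL : Gx + (ζ*P + (1-ζ)*Q) + ν/2*d ≤ Gz) :
    fy + (Q - P) + ζ*(μ-ν)/2*c - (fy - Gx - P)/(1-ζ) + ζ/(1-ζ)*(ν/2)*a + ν/2*b ≤ fu := by
  subst hc hd
  have h1ζ : (0:ℝ) < 1 - ζ := by linarith
  have hne : (1:ℝ) - ζ ≠ 0 := ne_of_gt h1ζ
  have e1 : (fy - Gx - P)/(1-ζ)*(1-ζ) = fy - Gx - P := div_mul_cancel₀ _ hne
  have e2 : ζ/(1-ζ)*(ν/2)*a*(1-ζ) = ζ*(ν/2)*a := by field_simp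
  have key : (fy + (Q - P) + ζ*(μ-ν)/2*(b - 2*R + a) - (fy - Gx - P)/(1-ζ)
      + ζ/(1-ζ)*(ν/2)*a + ν/2*b) * (1-ζ) ≤ fu * (1-ζ) := by nlinarith [hμ, hΓ, hL, e1, e2]
  exact le_of_mul_le_mul_right key h1ζ

/-- Lemma `lem:zeta`: partial recovery of the intrinsic strong convexity
of `φ` through the `ν`-convex bundle `Γ`. -/
theorem bb_recover_convexity
    {n : ℕ} (φ Γ : EuclideanSpace ℝ (Fin n) → ℝ)
    (domφ domΓ : Set (EuclideanSpace ℝ (Fin n)))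
    (μ ν : ℝ) (hν0 : 0 ≤ ν) (hνμ : ν ≤ μ)
    (hdom : domφ ⊆ domΓ)
    (hφconv : ConvexOn ℝ domφ φ) (hΓconv : ConvexOn ℝ domΓ Γ)
    (hφlsc : LowerSemicontinuousOn φ domφ) (hΓlsc : LowerSemicontinuousOn Γ domΓ)
    (hφμ : ∀ a ∈ domφ, ∀ b ∈ domφ, ∀ α : ℝ, 0 ≤ α → α ≤ 1 →
      φ (α • a + (1 - α) • b) ≤ α * φ a + (1 - α) * φ b - α * (1 - α) * μ / 2 * ‖a - b‖ ^ 2)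
    (hΓν : ∀ a ∈ domΓ, ∀ b ∈ domΓ, ∀ α : ℝ, 0 ≤ α → α ≤ 1 →
      Γ (α • a + (1 - α) • b) ≤ α * Γ a + (1 - α) * Γ b - α * (1 - α) * ν / 2 * ‖a - b‖ ^ 2)
    (hΓφ : ∀ u ∈ domφ, Γ u ≤ φ u)
    (χ ε lam : ℝ) (hχ0 : 0 ≤ χ) (hχ1 : χ < 1) (hε : 0 < ε) (hlam : 0 < lam)
    (xm : EuclideanSpace ℝ (Fin n)) (hxm : xm ∈ domφ)
    (x : EuclideanSpace ℝ (Fin n)) (hx : x ∈ domΓ)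
    (hxmin : ∀ u ∈ domΓ, Γ x + ‖x - xm‖ ^ 2 / (2 * lam) ≤ Γ u + ‖u - xm‖ ^ 2 / (2 * lam))
    (y : EuclideanSpace ℝ (Fin n)) (hy : y ∈ domφ)
    (hy2 : φ y + χ / (2 * lam) * ‖y - xm‖ ^ 2 - (Γ x + ‖x - xm‖ ^ 2 / (2 * lam)) ≤ ε)
    (s : EuclideanSpace ℝ (Fin n)) (hs : s = (1 / lam) • (xm - x))
    (η : ℝ) (hη : η = φ y - Γ x - ⟪s, y - x⟫) :
    ∀ ζ : ℝ, 0 ≤ ζ → ζ < 1 → ∀ u ∈ domφ,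
      φ y + ⟪s, u - y⟫ + ζ * (μ - ν) / 2 * ‖u - y‖ ^ 2 - η / (1 - ζ)
          + ζ / (1 - ζ) * (ν / 2) * ‖y - x‖ ^ 2 + ν / 2 * ‖u - x‖ ^ 2
        ≤ φ u := by
  have h2lam : (0:ℝ) < 2 * lam := by linarith
  -- Step 1: first-order optimality with ν-strong convexity
  have L1 : ∀ w ∈ domΓ, Γ x + ⟪s, w - x⟫ + ν/2 * ‖w - x‖^2 ≤ Γ w := by
    intro w hw
    have hsw : ⟪s, w - x⟫ = -(2*(1/(2*lam)) * ⟪x - xm, w - x⟫) := by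
      rw [hs, real_inner_smul_left, show xm - x = -(x - xm) by abel, inner_neg_left]
      field_simp
    have key : ∀ α : ℝ, 0 < α → α ≤ 1 →
        Γ x + ⟪s, w - x⟫ + ν/2 * ‖w - x‖^2
          ≤ Γ w + α * ((ν/2 + 1/(2*lam)) * ‖w - x‖^2) := by
      intro α hα0 hα1
      have hz : α • w + (1 - α) • x ∈ domΓ := hΓconv.1 hw hx hα0.le (by linarith) (by ring)
      have h1 := hxmin _ hz
      have h2 := hΓν w hw x hx α hα0.le hα1
      have hzz : α • w + (1 - α) • x - xm = (x - xm) + α • (w - x) := by module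
      have hnorm : ‖α • w + (1 - α) • x - xm‖^2
          = ‖x - xm‖^2 + 2*(α * ⟪x - xm, w - x⟫) + α^2 * ‖w - x‖^2 := by
        rw [hzz, norm_add_sq_real, real_inner_smul_right, norm_smul, mul_pow,
          Real.norm_eq_abs, sq_abs]
      rw [hnorm] at h1
      have hsplit : (‖x - xm‖^2 + 2*(α * ⟪x - xm, w - x⟫) + α^2 * ‖w - x‖^2) / (2*lam)
          = ‖x - xm‖^2 / (2*lam)
            + (2*(α * ⟪x - xm, w - x⟫) + α^2 * ‖w - x‖^2) * (1/(2*lam)) := by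
        field_simp
        ring
      rw [hsplit] at h1
      have h1' : 0 ≤ Γ (α • w + (1 - α) • x) - Γ x
          + (2*(α * ⟪x - xm, w - x⟫) + α^2 * ‖w - x‖^2) * (1/(2*lam)) := by linarith
      have := bb_key (Γ x) (Γ w) (Γ (α • w + (1 - α) • x)) (⟪x - xm, w - x⟫)
        (‖w - x‖^2) ν α (1/(2*lam)) hα0 h1' h2
      linarith [this, hsw]
    -- pass to the limit α → 0⁺
    have hC : 0 ≤ (ν/2 + 1/(2*lam)) * ‖w - x‖^2 := by positivity
    refine le_of_forall_pos_le_add ?_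
    intro ε' hε'
    set C := (ν/2 + 1/(2*lam)) * ‖w - x‖^2 with hCdef
    have hC1 : 0 < C + 1 := by linarith
    have hαpos : 0 < min 1 (ε'/(C+1)) := lt_min one_pos (by positivity)
    have hα1 : min 1 (ε'/(C+1)) ≤ 1 := min_le_left _ _
    have hkey := key _ hαpos hα1
    have hαle : min 1 (ε'/(C+1)) ≤ ε'/(C+1) := min_le_right _ _
    have hdm : ε'/(C+1)*(C+1) = ε' := div_mul_cancel₀ _ (ne_of_gt hC1)
    have : min 1 (ε'/(C+1)) * C ≤ ε' := by nlinarith [hαpos, hαle, hC, hdm]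
    linarith
  -- Step 2: combine with μ-strong convexity of φ
  intro ζ hζ0 hζ1 u hu
  have hz2 : ζ • y + (1 - ζ) • u ∈ domφ := hφconv.1 hy hu hζ0 (by linarith) (by ring)
  have hμ' := hφμ y hy u hu ζ hζ0 hζ1.le
  rw [norm_sub_rev y u] at hμ'
  have hΓz := hΓφ _ hz2
  have hL := L1 _ (hdom hz2)
  have hz2x : ζ • y + (1 - ζ) • u - x = ζ • (y - x) + (1 - ζ) • (u - x) := by module
  have hinner : ⟪s, ζ • y + (1 - ζ) • u - x⟫ = ζ * ⟪s, y - x⟫ + (1 - ζ) * ⟪s, u - x⟫ := by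
    rw [hz2x, inner_add_right, real_inner_smul_right, real_inner_smul_right]
  rw [hinner] at hL
  have hd : ‖ζ • y + (1 - ζ) • u - x‖^2
      = ζ^2 * ‖y - x‖^2 + 2*(ζ*(1-ζ)*⟪y - x, u - x⟫) + (1-ζ)^2 * ‖u - x‖^2 := by
    rw [hz2x, norm_add_sq_real, real_inner_smul_left, real_inner_smul_right,
      norm_smul, norm_smul]
    simp only [Real.norm_eq_abs, mul_pow, sq_abs]
    ring
  have hc : ‖u - y‖^2 = ‖u - x‖^2 - 2*⟪y - x, u - x⟫ + ‖y - x‖^2 := by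
    rw [show u - y = (u - x) - (y - x) by abel, norm_sub_sq_real, real_inner_comm]
  have huy : ⟪s, u - y⟫ = ⟪s, u - x⟫ - ⟪s, y - x⟫ := by
    rw [show u - y = (u - x) - (y - x) by abel, inner_sub_right]
  have hηd : η/(1-ζ) = (φ y - Γ x - ⟪s, y - x⟫)/(1-ζ) := by rw [hη]
  have := bb_alg (φ y) (φ u) (Γ x) (Γ (ζ • y + (1 - ζ) • u)) (φ (ζ • y + (1 - ζ) • u))
    (⟪s, y - x⟫) (⟪s, u - x⟫) (⟪y - x, u - x⟫) (‖y - x‖^2) (‖u - x‖^2)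
    (‖u - y‖^2) (‖ζ • y + (1 - ζ) • u - x‖^2) μ ν ζ hζ1 hc hd hμ' hΓz hL
  linarith [this, huy, hηd]
end

section
/- Then min over 1 ≤ k ≤ K of (φ(ŷ_k) − φ*) ≤ ε̄ holds for every positive integer K satisfying at least one of the following: (i) K ≥ d₀²/(λ̲ε̄); (ii) χ > 0, μ > 0 and K ≥ (1/χ)(1 + 1/(λ̲μ))·log(1 + μd₀²/ε̄); (iii) ν > 0 and K ≥ (1 + 1/(λ̲ν))·log(1 + μd₀²/ε̄). (Here log is the natural logarithm.) In other words, the number of iterations performed by any instance of the framework FSCO before finding an ε̄-solution is bounded by min{ min[(1/χ)(1+1/(λ̲μ)), 1+1/(λ̲ν)]·log(1+μd₀²/ε̄), d₀²/(λ̲ε̄) }. -/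
open scoped RealInnerProductSpace

variable {E : Type*} [NormedAddCommGroup E] [InnerProductSpace ℝ E]

lemma fsco_normsq_combo (a b p : E) (α : ℝ) :
    ‖α • a + (1 - α) • b - p‖ ^ 2
      = α * ‖a - p‖ ^ 2 + (1 - α) * ‖b - p‖ ^ 2 - α * (1 - α) * ‖a - b‖ ^ 2 := by
  have h : α • a + (1 - α) • b - p = α • (a - p) + (1 - α) • (b - p) := by
    module
  have h2 : a - b = (a - p) - (b - p) := by abel
  rw [h, h2]
  set x := a - p
  set y := b - p
  have e1 : ‖α • x + (1 - α) • y‖ ^ 2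
      = ‖α • x‖ ^ 2 + 2 * ⟪α • x, (1 - α) • y⟫ + ‖(1 - α) • y‖ ^ 2 := norm_add_sq_real _ _
  have e2 : ‖x - y‖ ^ 2 = ‖x‖ ^ 2 - 2 * ⟪x, y⟫ + ‖y‖ ^ 2 := norm_sub_sq_real _ _
  have e3 : ⟪α • x, (1 - α) • y⟫ = α * ((1 - α) * ⟪x, y⟫) := by
    rw [real_inner_smul_left, real_inner_smul_right]
  have e4 : ‖α • x‖ ^ 2 = α ^ 2 * ‖x‖ ^ 2 := by
    rw [norm_smul, mul_pow, Real.norm_eq_abs, sq_abs]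
  have e5 : ‖(1 - α) • y‖ ^ 2 = (1 - α) ^ 2 * ‖y‖ ^ 2 := by
    rw [norm_smul, mul_pow, Real.norm_eq_abs, sq_abs]
  rw [e1, e3, e4, e5, e2]; ring

lemma fsco_young2 (p y : E) (c B : ℝ) (hc : 0 ≤ c) :
    (B - c) * ‖p‖ ^ 2 - B * (B - c) * c * ‖y‖ ^ 2 ≤ B * ‖p + c • y‖ ^ 2 := by
  have e1 : ‖p + c • y‖ ^ 2 = ‖p‖ ^ 2 + 2 * ⟪p, c • y⟫ + ‖c • y‖ ^ 2 := norm_add_sq_real _ _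
  have e2 : ‖p + B • y‖ ^ 2 = ‖p‖ ^ 2 + 2 * ⟪p, B • y⟫ + ‖B • y‖ ^ 2 := norm_add_sq_real _ _
  have e3 : ⟪p, c • y⟫ = c * ⟪p, y⟫ := real_inner_smul_right _ _ _
  have e4 : ⟪p, B • y⟫ = B * ⟪p, y⟫ := real_inner_smul_right _ _ _
  have e5 : ‖c • y‖ ^ 2 = c ^ 2 * ‖y‖ ^ 2 := by
    rw [norm_smul, mul_pow, Real.norm_eq_abs, sq_abs]
  have e6 : ‖B • y‖ ^ 2 = B ^ 2 * ‖y‖ ^ 2 := by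
    rw [norm_smul, mul_pow, Real.norm_eq_abs, sq_abs]
  have hid : B * ‖p + c • y‖ ^ 2
      = (B - c) * ‖p‖ ^ 2 - B * (B - c) * c * ‖y‖ ^ 2 + c * ‖p + B • y‖ ^ 2 := by
    rw [e1, e2, e3, e4, e5, e6]; ring
  nlinarith [mul_nonneg hc (sq_nonneg ‖p + B • y‖), sq_nonneg ‖p + B • y‖]

lemma fsco_limit (c g : ℝ) (h : ∀ α : ℝ, 0 < α → α ≤ 1 → α * ((1 - α) * c) ≤ α * g) :
    c ≤ g := by
  have h' : ∀ α : ℝ, 0 < α → α ≤ 1 → (1 - α) * c ≤ g := by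
    intro α h0 h1
    exact le_of_mul_le_mul_left (h α h0 h1) h0
  have hg : 0 ≤ g := by have := h' 1 one_pos le_rfl; linarith
  rcases le_or_gt c 0 with hc | hc
  · linarith
  · by_contra hcg
    push_neg at hcg
    have hα0 : 0 < (c - g) / (2 * c) := div_pos (by linarith) (by linarith)
    have hα1 : (c - g) / (2 * c) ≤ 1 := by
      rw [div_le_one (by linarith)]; linarith
    have := h' _ hα0 hα1
    have he : (1 - (c - g) / (2 * c)) * c = c - (c - g) / 2 := by
      field_simp
    rw [he] at this; linarith

lemma fsco_rec_lin (D : ℕ → ℝ) (K : ℕ) (c : ℝ)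
    (h : ∀ k, 1 ≤ k → k ≤ K → D k ≤ D (k - 1) - c) : D K ≤ D 0 - K * c := by
  induction K with
  | zero => simp
  | succ n ih =>
    have h1 := h (n + 1) (by omega) le_rfl
    have h2 := ih (fun k hk1 hk2 => h k hk1 (by omega))
    simp only [Nat.add_sub_cancel] at h1
    push_cast
    linarith

lemma fsco_rec_pow (D : ℕ → ℝ) (K : ℕ) (ρ β : ℝ) (hρ : 0 ≤ ρ)
    (h : ∀ k, 1 ≤ k → k ≤ K → D k + β ≤ ρ * (D (k - 1) + β)) :
    D K + β ≤ ρ ^ K * (D 0 + β) := by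
  induction K with
  | zero => simp
  | succ n ih =>
    have h1 := h (n + 1) (by omega) le_rfl
    have h2 := ih (fun k hk1 hk2 => h k hk1 (by omega))
    simp only [Nat.add_sub_cancel] at h1
    calc D (n + 1) + β ≤ ρ * (D n + β) := h1
      _ ≤ ρ * (ρ ^ n * (D 0 + β)) := by
          exact mul_le_mul_of_nonneg_left h2 hρ
      _ = ρ ^ (n + 1) * (D 0 + β) := by ring

lemma fsco_sq_infDist_ge {x : E} {s : Set E} (hs : s.Nonempty) {R : ℝ} (hR : 0 ≤ R)
    (h : ∀ y ∈ s, R ≤ dist x y ^ 2) : R ≤ Metric.infDist x s ^ 2 := by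
  by_contra hlt
  push_neg at hlt
  have h0 : 0 ≤ Metric.infDist x s := Metric.infDist_nonneg
  have hsq : Metric.infDist x s < Real.sqrt R := by
    have e : Metric.infDist x s = Real.sqrt (Metric.infDist x s ^ 2) := by
      rw [Real.sqrt_sq h0]
    rw [e]
    exact Real.sqrt_lt_sqrt (by positivity) hlt
  obtain ⟨y, hy, hdy⟩ := (Metric.infDist_lt_iff hs).1 hsq
  have hd2 : dist x y ^ 2 < R := by
    nlinarith [Real.sq_sqrt hR, dist_nonneg (x := x) (y := y)]
  exact absurd (h y hy) (by linarith)

lemma fsco_mono_lam (d2 C μ χ L lam : ℝ) (hL : 0 < L) (hlamb : L ≤ lam) (hμ : 0 ≤ μ)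
    (hχ0 : 0 ≤ χ) (hχ1 : χ ≤ 1) (hC : 0 ≤ C) (hd2 : 0 ≤ d2) :
    (1 + (1 - χ) * L * μ) * (d2 - L * C) / (1 + L * μ)
      ≥ (1 + (1 - χ) * lam * μ) * (d2 - lam * C) / (1 + lam * μ) := by
  have hLμ : 0 < 1 + L * μ := by nlinarith
  have hlμ : 0 < 1 + lam * μ := by nlinarith
  rw [ge_iff_le, div_le_div_iff₀ hlμ hLμ]
  have hkey : 0 ≤ (lam - L) * (χ * μ * d2 + C * (1 + (1 - χ) * μ * (lam + L) + (1 - χ) * L * lam * μ ^ 2)) := by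
    apply mul_nonneg (by linarith)
    have h1 : 0 ≤ (1 - χ) * μ * (lam + L) := by
      apply mul_nonneg (mul_nonneg (by linarith) hμ); linarith
    have h2 : 0 ≤ (1 - χ) * L * lam * μ ^ 2 := by
      apply mul_nonneg (mul_nonneg (mul_nonneg (by linarith) hL.le) (by linarith)); positivity
    nlinarith [mul_nonneg (mul_nonneg hχ0 hμ) hd2]
  nlinarith [hkey]

lemma fsco_endgame (K : ℕ) (hK : 1 ≤ K) (ρ C X ε : ℝ) (hρ0 : 0 < ρ) (hρ1 : ρ < 1)
    (hε : 0 < ε) (hC : ε < C) (hX : 0 ≤ X)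
    (hDK : (1 / ρ) ^ K ≤ 1 + X / C)
    (hhyp : Real.log (1 + X / ε) ≤ (1 - ρ) * K) : False := by
  have hρinv : 1 < 1 / ρ := (one_lt_div hρ0).2 hρ1
  have hlogρ : 1 - ρ ≤ Real.log (1 / ρ) := by
    have := Real.log_le_sub_one_of_pos hρ0
    rw [one_div, Real.log_inv]; linarith
  have hKpos : (0:ℝ) < K := by exact_mod_cast hK
  have hCpos : 0 < C := by linarith
  rcases eq_or_lt_of_le hX with hX0 | hXpos
  · have hpow : 1 < (1 / ρ) ^ K := one_lt_pow₀ hρinv (by omega)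
    rw [← hX0] at hDK
    simp at hDK
    rw [one_div, inv_pow] at hpow
    linarith
  · have hargC : 0 < 1 + X / C := by positivity
    have l2 : (K : ℝ) * Real.log (1 / ρ) ≤ Real.log (1 + X / C) := by
      rw [← Real.log_pow]
      exact Real.log_le_log (by positivity) hDK
    have l1 : Real.log (1 + X / C) < Real.log (1 + X / ε) := by
      apply Real.log_lt_log hargC
      have : X / C < X / ε := div_lt_div_of_pos_left hXpos hε hC
      linarith
    have l3 : (1 - ρ) * K ≤ (K : ℝ) * Real.log (1 / ρ) := by
      have := mul_le_mul_of_nonneg_left hlogρ (le_of_lt hKpos)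
      linarith [this]
    linarith

lemma fsco_step2 (Dk d2 C μ χ L lam : ℝ) (hL : 0 < L) (hlamb : L ≤ lam) (hμ : 0 < μ)
    (hχ0 : 0 ≤ χ) (hχ1 : χ < 1) (hC : 0 ≤ C) (hd2 : 0 ≤ d2)
    (h : (1 + lam * μ) * Dk ≤ (1 + (1 - χ) * lam * μ) * (d2 - lam * C)) :
    μ * Dk + C ≤ (1 + (1 - χ) * L * μ) / (1 + L * μ) * (μ * d2 + C) := by
  have hden : 0 < 1 + L * μ := by nlinarith
  have hdlam : 0 < 1 + lam * μ := by nlinarith [hL.trans_le hlamb]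
  have hQ : Dk ≤ (1 + (1 - χ) * lam * μ) * (d2 - lam * C) / (1 + lam * μ) :=
    (le_div_iff₀ hdlam).mpr (by linarith)
  have hmono := fsco_mono_lam d2 C μ χ L lam hL hlamb hμ.le hχ0 hχ1.le hC hd2
  have hQ2 : Dk ≤ (1 + (1 - χ) * L * μ) * (d2 - L * C) / (1 + L * μ) := le_trans hQ hmono
  have hQ3 : Dk * (1 + L * μ) ≤ (1 + (1 - χ) * L * μ) * (d2 - L * C) :=
    (le_div_iff₀ hden).mp hQ2
  rw [div_mul_eq_mul_div, le_div_iff₀ hden]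
  nlinarith [mul_le_mul_of_nonneg_left hQ3 hμ.le,
    mul_nonneg (mul_nonneg (mul_nonneg (by linarith : (0:ℝ) ≤ 1 - χ) hC) hL.le) hμ.le,
    mul_nonneg (mul_nonneg (mul_nonneg (mul_nonneg (by linarith : (0:ℝ) ≤ 1 - χ) hC) hL.le) hL.le)
      (mul_nonneg hμ.le hμ.le)]

lemma fsco_step3 (Dk d2 C ν L lam : ℝ) (hL : 0 < L) (hlamb : L ≤ lam) (hν : 0 < ν)
    (hC : 0 ≤ C) (hd2 : 0 ≤ d2)
    (h : (1 + lam * ν) * Dk ≤ d2 - lam * C) :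
    ν * Dk + C ≤ 1 / (1 + L * ν) * (ν * d2 + C) := by
  have hden : 0 < 1 + L * ν := by nlinarith
  have hdlam : 0 < 1 + lam * ν := by nlinarith [hL.trans_le hlamb]
  have hQ : Dk ≤ (d2 - lam * C) / (1 + lam * ν) := (le_div_iff₀ hdlam).mpr (by linarith)
  have hmono : (d2 - lam * C) / (1 + lam * ν) ≤ (d2 - L * C) / (1 + L * ν) := by
    rw [div_le_div_iff₀ hdlam hden]
    nlinarith [mul_nonneg (sub_nonneg.2 hlamb) (add_nonneg (mul_nonneg hν.le hd2) hC),
      mul_nonneg hν.le hd2]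
  have hQ3 : Dk * (1 + L * ν) ≤ d2 - L * C := (le_div_iff₀ hden).mp (hQ.trans hmono)
  rw [div_mul_eq_mul_div, le_div_iff₀ hden]
  nlinarith [mul_le_mul_of_nonneg_left hQ3 hν.le]

set_option maxHeartbeats 4000000 in
/-- Theorem `thouter`: iteration-complexity of any instance of the
framework FSCO satisfying the stepsize lower-bound condition (F1). -/
theorem fsco_complexity
    {n : ℕ} (φ : EuclideanSpace ℝ (Fin n) → ℝ)
    (domφ : Set (EuclideanSpace ℝ (Fin n)))
    (μ ν : ℝ) (hμ0 : 0 ≤ μ) (hν0 : 0 ≤ ν) (hνμ : ν ≤ μ)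
    (hφconv : ConvexOn ℝ domφ φ) (hφlsc : LowerSemicontinuousOn φ domφ)
    (hφμ : ∀ a ∈ domφ, ∀ b ∈ domφ, ∀ α : ℝ, 0 ≤ α → α ≤ 1 →
      φ (α • a + (1 - α) • b) ≤ α * φ a + (1 - α) * φ b - α * (1 - α) * μ / 2 * ‖a - b‖ ^ 2)
    (Xstar : Set (EuclideanSpace ℝ (Fin n)))
    (hXstar : Xstar = {z | z ∈ domφ ∧ ∀ u ∈ domφ, φ z ≤ φ u})
    (hXne : Xstar.Nonempty)
    (φstar : ℝ) (hφstar : ∀ z ∈ Xstar, φ z = φstar)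
    (χ ε laml : ℝ) (hχ0 : 0 ≤ χ) (hχ1 : χ < 1) (hε : 0 < ε) (hlaml : 0 < laml)
    -- the sequences generated by FSCO (indexed from 1; `xh 0` is the initial point)
    (xh yh : ℕ → EuclideanSpace ℝ (Fin n))
    (Γ : ℕ → EuclideanSpace ℝ (Fin n) → ℝ)
    (domΓ : ℕ → Set (EuclideanSpace ℝ (Fin n)))
    (lam : ℕ → ℝ)
    (hxh : ∀ k, xh k ∈ domφ) (hyh : ∀ k, 1 ≤ k → yh k ∈ domφ)
    (hlam : ∀ k, 1 ≤ k → laml ≤ lam k)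
    (hdomΓ : ∀ k, 1 ≤ k → domφ ⊆ domΓ k)
    (hΓconv : ∀ k, 1 ≤ k → ConvexOn ℝ (domΓ k) (Γ k))
    (hΓlsc : ∀ k, 1 ≤ k → LowerSemicontinuousOn (Γ k) (domΓ k))
    (hΓν : ∀ k, 1 ≤ k → ∀ a ∈ domΓ k, ∀ b ∈ domΓ k, ∀ α : ℝ, 0 ≤ α → α ≤ 1 →
      Γ k (α • a + (1 - α) • b)
        ≤ α * Γ k a + (1 - α) * Γ k b - α * (1 - α) * ν / 2 * ‖a - b‖ ^ 2)
    (hΓφ : ∀ k, 1 ≤ k → ∀ u ∈ domφ, Γ k u ≤ φ u)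
    (hxmem : ∀ k, 1 ≤ k → xh k ∈ domΓ k)
    (hxmin : ∀ k, 1 ≤ k → ∀ u ∈ domΓ k,
      Γ k (xh k) + ‖xh k - xh (k - 1)‖ ^ 2 / (2 * lam k)
        ≤ Γ k u + ‖u - xh (k - 1)‖ ^ 2 / (2 * lam k))
    (hBB : ∀ k, 1 ≤ k →
      φ (yh k) + χ / (2 * lam k) * ‖yh k - xh (k - 1)‖ ^ 2
          - (Γ k (xh k) + ‖xh k - xh (k - 1)‖ ^ 2 / (2 * lam k))
        ≤ (1 - χ) * ε / 2)
    (d0 : ℝ) (hd0 : d0 = Metric.infDist (xh 0) Xstar) :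
    ∀ K : ℕ, 1 ≤ K →
      (d0 ^ 2 / (laml * ε) ≤ K ∨
        (0 < χ ∧ 0 < μ ∧
          1 / χ * (1 + 1 / (laml * μ)) * Real.log (1 + μ * d0 ^ 2 / ε) ≤ K) ∨
        (0 < ν ∧ (1 + 1 / (laml * ν)) * Real.log (1 + μ * d0 ^ 2 / ε) ≤ K)) →
      ∃ k, 1 ≤ k ∧ k ≤ K ∧ φ (yh k) - φstar ≤ ε := by
  intro K hK hcases
  by_contra hcon
  push_neg at hcon
  have hlampos : ∀ k, 1 ≤ k → 0 < lam k := fun k hk => lt_of_lt_of_le hlaml (hlam k hk)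
  have hdomconv : Convex ℝ domφ := hφconv.1
  -- the minimum gap m over 1 ≤ k ≤ K
  have hIcc : (Finset.Icc 1 K).Nonempty := ⟨1, Finset.mem_Icc.2 ⟨le_rfl, hK⟩⟩
  obtain ⟨k0, hk0mem, hk0⟩ := Finset.exists_mem_eq_inf' hIcc (fun k => φ (yh k) - φstar)
  set m := (Finset.Icc 1 K).inf' hIcc (fun k => φ (yh k) - φstar) with hmdef
  have hmle : ∀ k, 1 ≤ k → k ≤ K → m ≤ φ (yh k) - φstar := fun k h1 h2 =>
    Finset.inf'_le _ (Finset.mem_Icc.2 ⟨h1, h2⟩)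
  have hmgt : ε < m := by
    rw [hk0]
    exact hcon k0 (Finset.mem_Icc.1 hk0mem).1 (Finset.mem_Icc.1 hk0mem).2
  set C := 2 * m - ε with hCdef
  have hCε : ε < C := by linarith
  have hCpos : 0 < C := by linarith
  -- strong minimality of the prox subproblem (denominator-cleared form)
  have SMP : ∀ k, 1 ≤ k → ∀ u ∈ domΓ k,
      2 * lam k * Γ k (xh k) + ‖xh k - xh (k - 1)‖ ^ 2
          + (lam k * ν + 1) * ‖u - xh k‖ ^ 2
        ≤ 2 * lam k * Γ k u + ‖u - xh (k - 1)‖ ^ 2 := by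
    intro k hk u hu
    have hlk := hlampos k hk
    have h2l : (0:ℝ) < 2 * lam k := by linarith
    have hc : (lam k * ν + 1) * ‖u - xh k‖ ^ 2
        ≤ 2 * lam k * Γ k u + ‖u - xh (k - 1)‖ ^ 2
          - (2 * lam k * Γ k (xh k) + ‖xh k - xh (k - 1)‖ ^ 2) := by
      apply fsco_limit
      intro α hα0 hα1
      have huα : α • u + (1 - α) • xh k ∈ domΓ k :=
        (hΓconv k hk).1 hu (hxmem k hk) hα0.le (by linarith) (by ring)
      have h1 := hxmin k hk _ huα
      have h3 := fsco_normsq_combo u (xh k) (xh (k - 1)) α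
      rw [h3] at h1
      have H1 : 2 * lam k * Γ k (xh k) + ‖xh k - xh (k - 1)‖ ^ 2
          ≤ 2 * lam k * Γ k (α • u + (1 - α) • xh k)
            + (α * ‖u - xh (k - 1)‖ ^ 2 + (1 - α) * ‖xh k - xh (k - 1)‖ ^ 2
                - α * (1 - α) * ‖u - xh k‖ ^ 2) := by
        have hmul := mul_le_mul_of_nonneg_left h1 h2l.le
        have e1 : 2 * lam k * (‖xh k - xh (k - 1)‖ ^ 2 / (2 * lam k))
            = ‖xh k - xh (k - 1)‖ ^ 2 := by field_simp
        have e2 : 2 * lam k * ((α * ‖u - xh (k - 1)‖ ^ 2 + (1 - α) * ‖xh k - xh (k - 1)‖ ^ 2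
                - α * (1 - α) * ‖u - xh k‖ ^ 2) / (2 * lam k))
            = α * ‖u - xh (k - 1)‖ ^ 2 + (1 - α) * ‖xh k - xh (k - 1)‖ ^ 2
                - α * (1 - α) * ‖u - xh k‖ ^ 2 := by field_simp
        linarith [hmul, e1, e2]
      have h2 := hΓν k hk u hu (xh k) (hxmem k hk) α hα0.le hα1
      have H2 := mul_le_mul_of_nonneg_left h2 h2l.le
      linarith [H1, H2]
    linarith
  -- the key per-iteration inequality (polynomial form)
  have keyP : ∀ k, 1 ≤ k → ∀ u ∈ domφ,
      2 * lam k * φ (yh k) + χ * ‖yh k - xh (k - 1)‖ ^ 2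
          + (lam k * ν + 1) * ‖u - xh k‖ ^ 2
        ≤ lam k * ((1 - χ) * ε) + 2 * lam k * φ u + ‖u - xh (k - 1)‖ ^ 2 := by
    intro k hk u hu
    have hlk := hlampos k hk
    have h2l : (0:ℝ) < 2 * lam k := by linarith
    have hb := hBB k hk
    have hbP : 2 * lam k * φ (yh k) + χ * ‖yh k - xh (k - 1)‖ ^ 2
        ≤ lam k * ((1 - χ) * ε) + 2 * lam k * Γ k (xh k) + ‖xh k - xh (k - 1)‖ ^ 2 := by
      have hmul := mul_le_mul_of_nonneg_left hb h2l.le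
      have e1 : 2 * lam k * (χ / (2 * lam k) * ‖yh k - xh (k - 1)‖ ^ 2)
          = χ * ‖yh k - xh (k - 1)‖ ^ 2 := by field_simp
      have e2 : 2 * lam k * (‖xh k - xh (k - 1)‖ ^ 2 / (2 * lam k))
          = ‖xh k - xh (k - 1)‖ ^ 2 := by field_simp
      linarith [hmul, e1, e2]
    have hsm := SMP k hk u (hdomΓ k hk hu)
    have hg := mul_le_mul_of_nonneg_left (hΓφ k hk u hu) h2l.le
    linarith
  -- facts about minimizers
  have hXfact : ∀ xs ∈ Xstar, xs ∈ domφ ∧ φ xs = φstar := by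
    intro xs hxs
    refine ⟨?_, hφstar xs hxs⟩
    rw [hXstar] at hxs
    exact hxs.1
  rcases hcases with hcase | ⟨hχp, hμp, hcase⟩ | ⟨hνp, hcase⟩
  · -- Case (i)
    have hstep : ∀ xs ∈ Xstar, ∀ k, 1 ≤ k → k ≤ K →
        ‖xh k - xs‖ ^ 2 ≤ ‖xh (k - 1) - xs‖ ^ 2 - laml * C := by
      intro xs hxs k hk1 hk2
      obtain ⟨hxsdom, hxsφ⟩ := hXfact xs hxs
      have hlk := hlampos k hk1
      have hkp := keyP k hk1 xs hxsdom
      rw [hxsφ] at hkp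
      have ha := hmle k hk1 hk2
      have h1 : 0 ≤ χ * ‖yh k - xh (k - 1)‖ ^ 2 := by positivity
      have h2 : 0 ≤ lam k * ν * ‖xs - xh k‖ ^ 2 := by positivity
      -- λ C ≥ laml C and 2λ(φŷ - φstar) - λ(1-χ)ε ≥ λ C
      have h3 : laml * C ≤ lam k * C := mul_le_mul_of_nonneg_right (hlam k hk1) hCpos.le
      have h4 : lam k * C ≤ 2 * lam k * (φ (yh k) - φstar) - lam k * ((1 - χ) * ε) := by
        have : C ≤ 2 * (φ (yh k) - φstar) - (1 - χ) * ε := by nlinarith [mul_nonneg hχ0 hε.le]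
        nlinarith [mul_le_mul_of_nonneg_left this hlk.le]
      have h5 : ‖xh k - xs‖ = ‖xs - xh k‖ := norm_sub_rev _ _
      have h6 : ‖xh (k - 1) - xs‖ = ‖xs - xh (k - 1)‖ := norm_sub_rev _ _
      rw [h5, h6]
      linarith
    have hrec : ∀ xs ∈ Xstar, (K : ℝ) * (laml * C) ≤ dist (xh 0) xs ^ 2 := by
      intro xs hxs
      have := fsco_rec_lin (fun k => ‖xh k - xs‖ ^ 2) K (laml * C)
        (fun k hk1 hk2 => hstep xs hxs k hk1 hk2)
      have hnn : (0:ℝ) ≤ ‖xh K - xs‖ ^ 2 := by positivity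
      rw [dist_eq_norm]
      linarith
    have hd0sq : (K : ℝ) * (laml * C) ≤ d0 ^ 2 := by
      rw [hd0]
      exact fsco_sq_infDist_ge hXne (by positivity) hrec
    have hKc : d0 ^ 2 ≤ (K : ℝ) * (laml * ε) := by
      rw [div_le_iff₀ (by positivity : (0:ℝ) < laml * ε)] at hcase
      linarith
    have hKpos : (0:ℝ) < K := by exact_mod_cast hK
    nlinarith [mul_pos (mul_pos hKpos hlaml) (sub_pos.2 hCε)]
  · -- Case (ii)
    set ρ := (1 + (1 - χ) * laml * μ) / (1 + laml * μ) with hρdef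
    have hden : (0:ℝ) < 1 + laml * μ := by nlinarith
    have hnum : (0:ℝ) < 1 + (1 - χ) * laml * μ := by
      nlinarith [mul_nonneg (mul_nonneg (by linarith : (0:ℝ) ≤ 1 - χ) hlaml.le) hμp.le]
    have hρ0 : 0 < ρ := div_pos hnum hden
    have hρ1 : ρ < 1 := by
      rw [hρdef, div_lt_one hden]
      nlinarith [mul_pos (mul_pos hχp hlaml) hμp]
    have hstep : ∀ xs ∈ Xstar, ∀ k, 1 ≤ k → k ≤ K →
        μ * ‖xh k - xs‖ ^ 2 + C ≤ ρ * (μ * ‖xh (k - 1) - xs‖ ^ 2 + C) := by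
      intro xs hxs k hk1 hk2
      obtain ⟨hxsdom, hxsφ⟩ := hXfact xs hxs
      have hlk := hlampos k hk1
      have h2l : (0:ℝ) < 2 * lam k := by linarith
      have hydom := hyh k hk1
      have hcc : (1:ℝ) - (1 - χ) = χ := by ring
      set u := (1 - χ) • xs + χ • yh k with hudef
      have hudom : u ∈ domφ := hdomconv hxsdom hydom (by linarith) hχ0 (by ring)
      have hE1 := hφμ xs hxsdom (yh k) hydom (1 - χ) (by linarith) (by linarith)
      rw [hcc] at hE1
      rw [← hudef] at hE1
      rw [hxsφ] at hE1
      have hE2 := fsco_normsq_combo xs (yh k) (xh (k - 1)) (1 - χ)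
      rw [hcc] at hE2
      rw [← hudef] at hE2
      have heq : xs - xh k + χ • (yh k - xs) = u - xh k := by rw [hudef]; module
      have hE3 := fsco_young2 (xs - xh k) (yh k - xs) χ (1 + (1 - χ) * lam k * μ) hχ0
      rw [heq] at hE3
      have h5 : ‖xs - xh k‖ = ‖xh k - xs‖ := norm_sub_rev _ _
      have h6 : ‖xs - xh (k - 1)‖ = ‖xh (k - 1) - xs‖ := norm_sub_rev _ _
      have h7 : ‖yh k - xs‖ = ‖xs - yh k‖ := norm_sub_rev _ _
      rw [h5, h7] at hE3
      rw [h6] at hE2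
      have hkp := keyP k hk1 u hudom
      have hBk : (0:ℝ) < 1 + (1 - χ) * lam k * μ := by
        nlinarith [mul_nonneg (mul_nonneg (by linarith : (0:ℝ) ≤ 1 - χ) hlk.le) hμp.le]
      have hKB := mul_le_mul_of_nonneg_left hkp hBk.le
      have hE1B := mul_le_mul_of_nonneg_left (mul_le_mul_of_nonneg_left hE1 h2l.le) hBk.le
      have hE2B : (1 + (1 - χ) * lam k * μ) * ‖u - xh (k - 1)‖ ^ 2
          = (1 + (1 - χ) * lam k * μ) * ((1 - χ) * ‖xh (k - 1) - xs‖ ^ 2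
              + χ * ‖yh k - xh (k - 1)‖ ^ 2 - (1 - χ) * χ * ‖xs - yh k‖ ^ 2) := by
        rw [hE2]
      have hνB : 0 ≤ (1 + (1 - χ) * lam k * μ) * (lam k * ν * ‖u - xh k‖ ^ 2) := by
        apply mul_nonneg hBk.le; positivity
      have ha := hmle k hk1 hk2
      have haB : 0 ≤ (1 + (1 - χ) * lam k * μ)
          * (2 * lam k * ((1 - χ) * (φ (yh k) - φstar - m))) := by
        apply mul_nonneg hBk.le
        apply mul_nonneg h2l.le
        exact mul_nonneg (by linarith) (by linarith)
      have G1 : (1 - χ) * ((1 + lam k * μ) * ‖xh k - xs‖ ^ 2)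
          ≤ (1 - χ) * ((1 + (1 - χ) * lam k * μ)
              * (‖xh (k - 1) - xs‖ ^ 2 - lam k * (2 * m - ε))) := by
        linarith [hKB, hE1B, hE2B, hE3, hνB, haB]
      have G2 : (1 + lam k * μ) * ‖xh k - xs‖ ^ 2
          ≤ (1 + (1 - χ) * lam k * μ) * (‖xh (k - 1) - xs‖ ^ 2 - lam k * C) := by
        rw [hCdef]
        exact le_of_mul_le_mul_left G1 (by linarith)
      exact fsco_step2 _ _ C μ χ laml (lam k) hlaml (hlam k hk1) hμp hχ0 hχ1
        hCpos.le (by positivity) G2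
    have hforall : ∀ xs ∈ Xstar, (C * (1 / ρ) ^ K - C) / μ ≤ dist (xh 0) xs ^ 2 := by
      intro xs hxs
      have hrec := fsco_rec_pow (fun j => μ * ‖xh j - xs‖ ^ 2) K ρ C hρ0.le
        (fun k hk1 hk2 => hstep xs hxs k hk1 hk2)
      have hPρ : (1 / ρ) ^ K * ρ ^ K = 1 := by
        rw [← mul_pow, one_div_mul_cancel (ne_of_gt hρ0), one_pow]
      have hnn : (0:ℝ) ≤ μ * ‖xh K - xs‖ ^ 2 := by positivity
      have h1 : C ≤ ρ ^ K * (μ * ‖xh 0 - xs‖ ^ 2 + C) := by linarith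
      have h2 := mul_le_mul_of_nonneg_left h1 (by positivity : (0:ℝ) ≤ (1 / ρ) ^ K)
      rw [← mul_assoc, hPρ, one_mul] at h2
      rw [dist_eq_norm, div_le_iff₀ hμp]
      nlinarith [h2]
    have hρinvK : (1:ℝ) ≤ (1 / ρ) ^ K := one_le_pow₀ (by
      rw [le_div_iff₀ hρ0]; linarith)
    have hd0sq : (C * (1 / ρ) ^ K - C) / μ ≤ d0 ^ 2 := by
      rw [hd0]
      refine fsco_sq_infDist_ge hXne ?_ hforall
      have : 0 ≤ C * (1 / ρ) ^ K - C := by nlinarith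
      positivity
    have hDK : (1 / ρ) ^ K ≤ 1 + μ * d0 ^ 2 / C := by
      rw [div_le_iff₀ hμp] at hd0sq
      have : (1 / ρ) ^ K - 1 ≤ μ * d0 ^ 2 / C := by
        rw [le_div_iff₀ hCpos]; nlinarith [hd0sq]
      linarith
    have hr0 : (0:ℝ) < 1 - ρ := by linarith
    have hid : (1 - ρ) * (1 / χ * (1 + 1 / (laml * μ))) = 1 := by
      rw [hρdef]
      field_simp
      ring
    have hhyp : Real.log (1 + μ * d0 ^ 2 / ε) ≤ (1 - ρ) * K := by
      calc Real.log (1 + μ * d0 ^ 2 / ε)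
          = (1 - ρ) * (1 / χ * (1 + 1 / (laml * μ)) * Real.log (1 + μ * d0 ^ 2 / ε)) := by
            rw [← mul_assoc, hid, one_mul]
        _ ≤ (1 - ρ) * K := mul_le_mul_of_nonneg_left hcase hr0.le
    exact fsco_endgame K hK ρ C (μ * d0 ^ 2) ε hρ0 hρ1 hε hCε (by positivity) hDK hhyp

  · -- Case (iii)
    have hμp : 0 < μ := lt_of_lt_of_le hνp hνμ
    set ρ := 1 / (1 + laml * ν) with hρdef
    have hden : (0:ℝ) < 1 + laml * ν := by nlinarith
    have hρ0 : 0 < ρ := by rw [hρdef]; positivity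
    have hρ1 : ρ < 1 := by
      rw [hρdef, div_lt_one hden]; nlinarith [mul_pos hlaml hνp]
    have hstep : ∀ xs ∈ Xstar, ∀ k, 1 ≤ k → k ≤ K →
        ν * ‖xh k - xs‖ ^ 2 + C ≤ ρ * (ν * ‖xh (k - 1) - xs‖ ^ 2 + C) := by
      intro xs hxs k hk1 hk2
      obtain ⟨hxsdom, hxsφ⟩ := hXfact xs hxs
      have hlk := hlampos k hk1
      have hkp := keyP k hk1 xs hxsdom
      rw [hxsφ] at hkp
      have ha := hmle k hk1 hk2
      have h1 : 0 ≤ χ * ‖yh k - xh (k - 1)‖ ^ 2 := by positivity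
      have h4 : lam k * C ≤ 2 * lam k * (φ (yh k) - φstar) - lam k * ((1 - χ) * ε) := by
        have : C ≤ 2 * (φ (yh k) - φstar) - (1 - χ) * ε := by nlinarith [mul_nonneg hχ0 hε.le]
        nlinarith [mul_le_mul_of_nonneg_left this hlk.le]
      have h5 : ‖xh k - xs‖ = ‖xs - xh k‖ := norm_sub_rev _ _
      have h6 : ‖xh (k - 1) - xs‖ = ‖xs - xh (k - 1)‖ := norm_sub_rev _ _
      have hpoly : (1 + lam k * ν) * ‖xh k - xs‖ ^ 2 ≤ ‖xh (k - 1) - xs‖ ^ 2 - lam k * C := by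
        rw [h5, h6]; linarith
      exact fsco_step3 _ _ C ν laml (lam k) hlaml (hlam k hk1) hνp hCpos.le
        (by positivity) hpoly
    have hforall : ∀ xs ∈ Xstar, (C * (1 + laml * ν) ^ K - C) / μ ≤ dist (xh 0) xs ^ 2 := by
      intro xs hxs
      have hrec := fsco_rec_pow (fun j => ν * ‖xh j - xs‖ ^ 2) K ρ C hρ0.le
        (fun k hk1 hk2 => hstep xs hxs k hk1 hk2)
      have hPρ : (1 + laml * ν) ^ K * ρ ^ K = 1 := by
        rw [hρdef, ← mul_pow, mul_one_div_cancel (ne_of_gt hden), one_pow]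
      have hnn : (0:ℝ) ≤ ν * ‖xh K - xs‖ ^ 2 := by positivity
      have h1 : C ≤ ρ ^ K * (ν * ‖xh 0 - xs‖ ^ 2 + C) := by linarith
      have h2 := mul_le_mul_of_nonneg_left h1 (by positivity : (0:ℝ) ≤ (1 + laml * ν) ^ K)
      rw [← mul_assoc, hPρ, one_mul] at h2
      have h3 : ν * ‖xh 0 - xs‖ ^ 2 ≤ μ * ‖xh 0 - xs‖ ^ 2 :=
        mul_le_mul_of_nonneg_right hνμ (by positivity)
      rw [dist_eq_norm, div_le_iff₀ hμp]
      nlinarith [h2, h3]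
    have hd0sq : (C * (1 + laml * ν) ^ K - C) / μ ≤ d0 ^ 2 := by
      rw [hd0]
      refine fsco_sq_infDist_ge hXne ?_ hforall
      have hP1 : (1:ℝ) ≤ (1 + laml * ν) ^ K := one_le_pow₀ (by nlinarith [mul_pos hlaml hνp])
      have : 0 ≤ C * (1 + laml * ν) ^ K - C := by nlinarith
      positivity
    have hDK : (1 / ρ) ^ K ≤ 1 + μ * d0 ^ 2 / C := by
      have hinv : 1 / ρ = 1 + laml * ν := by rw [hρdef, one_div_one_div]
      rw [hinv]
      rw [div_le_iff₀ hμp] at hd0sq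
      have : (1 + laml * ν) ^ K - 1 ≤ μ * d0 ^ 2 / C := by
        rw [le_div_iff₀ hCpos]; nlinarith [hd0sq]
      linarith
    have hr0 : (0:ℝ) < 1 - ρ := by linarith
    have hid : (1 - ρ) * (1 + 1 / (laml * ν)) = 1 := by
      rw [hρdef]
      have h1 : laml * ν ≠ 0 := by positivity
      field_simp
      ring
    have hhyp : Real.log (1 + μ * d0 ^ 2 / ε) ≤ (1 - ρ) * K := by
      calc Real.log (1 + μ * d0 ^ 2 / ε)
          = (1 - ρ) * ((1 + 1 / (laml * ν)) * Real.log (1 + μ * d0 ^ 2 / ε)) := by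
            rw [← mul_assoc, hid, one_mul]
        _ ≤ (1 - ρ) * K := mul_le_mul_of_nonneg_left hcase hr0.le
    exact fsco_endgame K hK ρ C (μ * d0 ^ 2) ε hρ0 hρ1 hε hCε (by positivity) hDK hhyp
end

section
/- Assume 4M_f² + ε̄L_f > 0. Then the sequence of accepted stepsizes {λ_k} produced by U-CS is non-increasing and every accepted stepsize satisfies λ_k ≥ min{ (1−χ)²ε̄/(8M_f² + 2ε̄L_f), λ₀ }. -/
open scoped RealInnerProductSpace

open Finset in
lemma gauss_real : ∀ m : ℕ, ∑ i ∈ range m, ((i:ℝ)+1) = m*(m+1)/2 := by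
  intro m
  induction m with
  | zero => simp
  | succ k ih => rw [Finset.sum_range_succ, ih]; push_cast; ring

open Finset in
lemma ucs_descent_aux {n : ℕ} (f : EuclideanSpace ℝ (Fin n) → ℝ)
    (domh : Set (EuclideanSpace ℝ (Fin n)))
    (hconv : Convex ℝ domh)
    (f' : EuclideanSpace ℝ (Fin n) → EuclideanSpace ℝ (Fin n))
    (Mf Lf : ℝ)
    (horacle : ∀ x ∈ domh, ∀ u ∈ domh, f x + ⟪f' x, u - x⟫ ≤ f u)
    (hhybrid : ∀ x ∈ domh, ∀ y ∈ domh, ‖f' x - f' y‖ ≤ 2 * Mf + Lf * ‖x - y‖)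
    (c x : EuclideanSpace ℝ (Fin n)) (hc : c ∈ domh) (hx : x ∈ domh) :
    f x - (f c + ⟪f' c, x - c⟫) ≤ 2 * Mf * ‖x - c‖ + Lf / 2 * ‖x - c‖ ^ 2 := by
  set d : ℝ := ‖x - c‖ with hd
  have hd0 : 0 ≤ d := norm_nonneg _
  have main : ∀ N : ℕ, 1 ≤ N →
      f x - (f c + ⟪f' c, x - c⟫) ≤ 2 * Mf * d + Lf / 2 * d ^ 2 + Lf * d ^ 2 / (2 * N) := by
    intro N hN
    have hN0 : (0 : ℝ) < N := by exact_mod_cast hN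
    set z : ℕ → EuclideanSpace ℝ (Fin n) := fun i => c + ((i : ℝ) / N) • (x - c) with hz
    have hzmem : ∀ i ≤ N, z i ∈ domh := by
      intro i hi
      have ht0 : (0:ℝ) ≤ (i : ℝ) / N := by positivity
      have ht1 : (i : ℝ) / N ≤ 1 := by
        rw [div_le_one hN0]; exact_mod_cast hi
      have hrepr : z i = (1 - (i:ℝ)/N) • c + ((i:ℝ)/N) • x := by
        simp only [hz]; module
      rw [hrepr]
      exact hconv hc hx (by linarith) ht0 (by ring)
    have hz0 : z 0 = c := by simp [hz]
    have hzN : z N = x := by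
      simp only [hz, div_self (ne_of_gt hN0), one_smul]
      abel
    have hstep : ∀ i < N, f (z (i+1)) - f (z i) ≤ ⟪f' (z (i+1)), x - c⟫ / N := by
      intro i hi
      have h1 := horacle (z (i+1)) (hzmem _ hi) (z i) (hzmem _ (le_of_lt hi))
      have hdiff : z i - z (i+1) = (-(1/(N:ℝ))) • (x - c) := by
        have hs : ((i+1:ℕ):ℝ)/N = (i:ℝ)/N + 1/N := by push_cast; field_simp
        simp only [hz]
        rw [hs]
        module
      rw [hdiff, real_inner_smul_right] at h1
      have he : ⟪f' (z (i+1)), x - c⟫ / N = (1/N) * ⟪f' (z (i+1)), x - c⟫ := by ring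
      linarith [h1]
    have hterm : ∀ i < N, ⟪f' (z (i+1)), x - c⟫ / N - ⟪f' c, x - c⟫ / N
        ≤ (2 * Mf + Lf * (((i:ℝ)+1)/N) * d) * d / N := by
      intro i hi
      have hinner : ⟪f' (z (i+1)) - f' c, x - c⟫ ≤ ‖f' (z (i+1)) - f' c‖ * d :=
        real_inner_le_norm _ _
      have hnormz : ‖z (i+1) - c‖ = (((i:ℝ)+1)/N) * d := by
        simp only [hz, add_sub_cancel_left, norm_smul]
        rw [Real.norm_eq_abs, abs_of_nonneg (by positivity)]
        push_cast; ring
      have hh := hhybrid (z (i+1)) (hzmem _ hi) c hc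
      rw [hnormz, ← mul_assoc] at hh
      have hsub2 : ⟪f' (z (i+1)) - f' c, x - c⟫ = ⟪f' (z (i+1)), x - c⟫ - ⟪f' c, x - c⟫ := by
        rw [inner_sub_left]
      have hb : ⟪f' (z (i+1)), x - c⟫ - ⟪f' c, x - c⟫ ≤ (2 * Mf + Lf * (((i:ℝ)+1)/N) * d) * d := by
        rw [← hsub2]
        exact hinner.trans (mul_le_mul_of_nonneg_right hh hd0)
      calc ⟪f' (z (i+1)), x - c⟫ / N - ⟪f' c, x - c⟫ / N
          = (⟪f' (z (i+1)), x - c⟫ - ⟪f' c, x - c⟫) / N := by ring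
        _ ≤ (2 * Mf + Lf * (((i:ℝ)+1)/N) * d) * d / N := by gcongr
    have htel : f x - f c = ∑ i ∈ range N, (f (z (i+1)) - f (z i)) := by
      rw [Finset.sum_range_sub (fun i => f (z i)) N, hz0, hzN]
    have hconst : ⟪f' c, x - c⟫ = ∑ _i ∈ range N, ⟪f' c, x - c⟫ / N := by
      rw [Finset.sum_const, Finset.card_range, nsmul_eq_mul]
      field_simp
    have hsum_le : f x - (f c + ⟪f' c, x - c⟫)
        ≤ ∑ i ∈ range N, (2 * Mf + Lf * (((i:ℝ)+1)/N) * d) * d / N := by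
      have : f x - (f c + ⟪f' c, x - c⟫)
          = ∑ i ∈ range N, ((f (z (i+1)) - f (z i)) - ⟪f' c, x - c⟫ / N) := by
        rw [Finset.sum_sub_distrib, ← htel, ← hconst]; ring
      rw [this]
      apply Finset.sum_le_sum
      intro i hi
      have hi' := Finset.mem_range.mp hi
      linarith [hstep i hi', hterm i hi']
    have hsum_eq : ∑ i ∈ range N, (2 * Mf + Lf * (((i:ℝ)+1)/N) * d) * d / N
        = 2 * Mf * d + Lf / 2 * d ^ 2 + Lf * d ^ 2 / (2 * N) := by
      have expand : ∀ i ∈ range N,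
          (2 * Mf + Lf * (((i:ℝ)+1)/N) * d) * d / N
            = 2 * Mf * d / N + (Lf * d ^ 2 / N ^ 2) * ((i:ℝ)+1) := by
        intro i _
        field_simp
      rw [Finset.sum_congr rfl expand, Finset.sum_add_distrib, Finset.sum_const,
        Finset.card_range, nsmul_eq_mul, ← Finset.mul_sum, gauss_real]
      field_simp
      ring
    rw [hsum_eq] at hsum_le
    exact hsum_le
  refine le_of_forall_pos_le_add ?_
  intro δ hδ
  set N : ℕ := max 1 (Nat.ceil (Lf * d ^ 2 / (2 * δ))) with hNdef
  have h1N : 1 ≤ N := le_max_left _ _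
  have hmN := main N h1N
  have hN0 : (0:ℝ) < N := by exact_mod_cast h1N
  have hceil : Lf * d ^ 2 / (2 * δ) ≤ (N : ℝ) := by
    refine (Nat.le_ceil _).trans ?_
    exact Nat.cast_le.mpr (le_max_right _ _)
  have hsmall : Lf * d ^ 2 / (2 * N) ≤ δ := by
    rw [div_le_iff₀ (by positivity)]
    rw [div_le_iff₀ (by positivity : (0:ℝ) < 2 * δ)] at hceil
    nlinarith
  linarith

/-- Proposition `lem:ACSCS` (a), (b): the stepsizes produced by U-CS are
non-increasing, and every accepted stepsize is bounded below by
`min ((1−χ)²ε̄/(8M_f² + 2ε̄L_f)) λ₀`. The execution of U-CS is modeled by the sequence of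
step-1 trials `t = 0, 1, 2, …` as in the complexity theorem. -/
theorem ucs_stepsize_bounds
    {n : ℕ} (f h : EuclideanSpace ℝ (Fin n) → ℝ)
    (domf domh : Set (EuclideanSpace ℝ (Fin n)))
    (f' : EuclideanSpace ℝ (Fin n) → EuclideanSpace ℝ (Fin n))
    (Mf Lf : ℝ) (hMf : 0 ≤ Mf) (hLf : 0 ≤ Lf)
    (hsub : domh ⊆ domf)
    (hfconv : ConvexOn ℝ domf f) (hhconv : ConvexOn ℝ domh h)
    (hflsc : LowerSemicontinuousOn f domf) (hhlsc : LowerSemicontinuousOn h domh)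
    (horacle : ∀ x ∈ domh, ∀ u ∈ domf, f x + ⟪f' x, u - x⟫ ≤ f u)
    (hhybrid : ∀ x ∈ domh, ∀ y ∈ domh, ‖f' x - f' y‖ ≤ 2 * Mf + Lf * ‖x - y‖)
    (Xstar : Set (EuclideanSpace ℝ (Fin n)))
    (hXstar : Xstar = {z | z ∈ domh ∧ ∀ u ∈ domh, f z + h z ≤ f u + h u})
    (hXne : Xstar.Nonempty)
    -- inputs of U-CS
    (x0 : EuclideanSpace ℝ (Fin n)) (hx0 : x0 ∈ domh)
    (χ lam0 ε : ℝ) (hχ0 : 0 ≤ χ) (hχ1 : χ < 1) (hlam0 : 0 < lam0) (hε : 0 < ε)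
    (hden : 0 < 4 * Mf ^ 2 + ε * Lf)
    -- the execution of U-CS (trials of step 1)
    (c : ℕ → EuclideanSpace ℝ (Fin n)) (lam : ℕ → ℝ) (x : ℕ → EuclideanSpace ℝ (Fin n))
    (hc0 : c 0 = x0) (hl0 : lam 0 = lam0)
    (hcdom : ∀ t, c t ∈ domh) (hxdom : ∀ t, x t ∈ domh)
    (hxmin : ∀ t, ∀ u ∈ domh,
      f (c t) + ⟪f' (c t), x t - c t⟫ + h (x t) + ‖x t - c t‖ ^ 2 / (2 * lam t)
        ≤ f (c t) + ⟪f' (c t), u - c t⟫ + h u + ‖u - c t‖ ^ 2 / (2 * lam t))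
    (hpass : ∀ t,
      f (x t) - (f (c t) + ⟪f' (c t), x t - c t⟫) - (1 - χ) / (2 * lam t) * ‖x t - c t‖ ^ 2
          ≤ (1 - χ) * ε / 2 →
      lam (t + 1) = lam t ∧ c (t + 1) = x t)
    (hfail : ∀ t,
      ¬ (f (x t) - (f (c t) + ⟪f' (c t), x t - c t⟫)
            - (1 - χ) / (2 * lam t) * ‖x t - c t‖ ^ 2
          ≤ (1 - χ) * ε / 2) →
      lam (t + 1) = lam t / 2 ∧ c (t + 1) = c t) :
    (∀ t, lam (t + 1) ≤ lam t) ∧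
    (∀ t,
      f (x t) - (f (c t) + ⟪f' (c t), x t - c t⟫) - (1 - χ) / (2 * lam t) * ‖x t - c t‖ ^ 2
          ≤ (1 - χ) * ε / 2 →
      min ((1 - χ) ^ 2 * ε / (8 * Mf ^ 2 + 2 * ε * Lf)) lam0 ≤ lam t) := by
  have hone : (0:ℝ) < 1 - χ := by linarith
  have hlampos : ∀ t, 0 < lam t := by
    intro t
    induction t with
    | zero => rw [hl0]; exact hlam0
    | succ t ih =>
      by_cases ht : f (x t) - (f (c t) + ⟪f' (c t), x t - c t⟫)
          - (1 - χ) / (2 * lam t) * ‖x t - c t‖ ^ 2 ≤ (1 - χ) * ε / 2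
      · rw [(hpass t ht).1]; exact ih
      · rw [(hfail t ht).1]; linarith
  have hdesc : ∀ t, f (x t) - (f (c t) + ⟪f' (c t), x t - c t⟫)
      ≤ 2 * Mf * ‖x t - c t‖ + Lf / 2 * ‖x t - c t‖ ^ 2 :=
    fun t => ucs_descent_aux f domh hhconv.1 f' Mf Lf
      (fun a ha u hu => horacle a ha u (hsub hu)) hhybrid (c t) (x t) (hcdom t) (hxdom t)
  have hden2 : 0 < 4 * Mf ^ 2 + (1 - χ) * ε * Lf := by
    nlinarith [mul_pos hone hden, mul_nonneg hχ0 (sq_nonneg Mf)]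
  have hthresh : ∀ t, lam t ≤ (1 - χ) ^ 2 * ε / (4 * Mf ^ 2 + (1 - χ) * ε * Lf) →
      f (x t) - (f (c t) + ⟪f' (c t), x t - c t⟫)
        - (1 - χ) / (2 * lam t) * ‖x t - c t‖ ^ 2 ≤ (1 - χ) * ε / 2 := by
    intro t hle
    set d : ℝ := ‖x t - c t‖ with hdd
    have hd0 : (0:ℝ) ≤ d := norm_nonneg _
    have hlp := hlampos t
    have h1 : lam t * (4 * Mf ^ 2 + (1 - χ) * ε * Lf) ≤ (1 - χ) ^ 2 * ε := by
      rw [← le_div_iff₀ hden2]; exact hle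
    have hstep : (4 * Mf ^ 2 + (1 - χ) * ε * Lf) ≤ (1 - χ) / (2 * lam t) * (2 * (1 - χ) * ε) := by
      rw [div_mul_eq_mul_div, le_div_iff₀ (by positivity : (0:ℝ) < 2 * lam t)]
      nlinarith [h1]
    have hAd : (4 * Mf ^ 2 + (1 - χ) * ε * Lf) * d ^ 2
        ≤ (1 - χ) / (2 * lam t) * d ^ 2 * (2 * (1 - χ) * ε) := by
      nlinarith [mul_le_mul_of_nonneg_right hstep (sq_nonneg d)]
    have hG : (2 * Mf * d + Lf / 2 * d ^ 2 - (1 - χ) * ε / 2) * (2 * (1 - χ) * ε)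
        ≤ (4 * Mf ^ 2 + (1 - χ) * ε * Lf) * d ^ 2 := by
      nlinarith [sq_nonneg (2 * Mf * d - (1 - χ) * ε)]
    have hfin : 2 * Mf * d + Lf / 2 * d ^ 2 - (1 - χ) * ε / 2
        ≤ (1 - χ) / (2 * lam t) * d ^ 2 :=
      le_of_mul_le_mul_right (hG.trans hAd) (by positivity)
    linarith [hdesc t]
  have hinv : ∀ t, min ((1 - χ) ^ 2 * ε / (8 * Mf ^ 2 + 2 * ε * Lf)) lam0 ≤ lam t := by
    intro t
    induction t with
    | zero => rw [hl0]; exact min_le_right _ _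
    | succ t ih =>
      by_cases ht : f (x t) - (f (c t) + ⟪f' (c t), x t - c t⟫)
          - (1 - χ) / (2 * lam t) * ‖x t - c t‖ ^ 2 ≤ (1 - χ) * ε / 2
      · rw [(hpass t ht).1]; exact ih
      · rw [(hfail t ht).1]
        have hgt : (1 - χ) ^ 2 * ε / (4 * Mf ^ 2 + (1 - χ) * ε * Lf) < lam t := by
          by_contra hcon
          push_neg at hcon
          exact ht (hthresh t hcon)
        refine le_trans (min_le_left _ _) ?_
        have hcmp : (1 - χ) ^ 2 * ε / (8 * Mf ^ 2 + 2 * ε * Lf)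
            ≤ (1 - χ) ^ 2 * ε / (4 * Mf ^ 2 + (1 - χ) * ε * Lf) / 2 := by
          rw [div_div]
          apply div_le_div_of_nonneg_left (by positivity) (by positivity)
          nlinarith [mul_nonneg (mul_nonneg hχ0 hε.le) hLf]
        linarith
  constructor
  · intro t
    by_cases ht : f (x t) - (f (c t) + ⟪f' (c t), x t - c t⟫)
        - (1 - χ) / (2 * lam t) * ‖x t - c t‖ ^ 2 ≤ (1 - χ) * ε / 2
    · rw [(hpass t ht).1]
    · rw [(hfail t ht).1]; linarith [hlampos t]
  · exact fun t _ => hinv t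
end

section
/- If t_j > (1−χ)ε̄/2, then j − i < (1 + u_λ)·log(4t_i / ((1−χ)ε̄)), where log is the natural logarithm. -/
open scoped RealInnerProductSpace

set_option maxHeartbeats 1000000

lemma norm_combo_aux {n : ℕ} (θ : ℝ) (v w : EuclideanSpace ℝ (Fin n)) :
    ‖(1-θ) • v + θ • w‖^2 = (1-θ)*‖v‖^2 + θ*‖w‖^2 - θ*(1-θ)*‖w - v‖^2 := by
  have h1 : ‖(1-θ) • v + θ • w‖^2
      = (1-θ)^2*‖v‖^2 + 2*((1-θ)*θ)*⟪v, w⟫ + θ^2*‖w‖^2 := by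
    rw [norm_add_sq_real, norm_smul, norm_smul, real_inner_smul_left, real_inner_smul_right]
    simp only [Real.norm_eq_abs, mul_pow, sq_abs]
    ring
  have h2 : ‖w - v‖^2 = ‖w‖^2 - 2*⟪w, v⟫ + ‖v‖^2 := norm_sub_sq_real w v
  have h3 : ⟪w, v⟫ = ⟪v, w⟫ := (real_inner_comm w v).symm
  rw [h1, h2, h3]; ring

lemma three_point_aux {n : ℕ} {s : Set (EuclideanSpace ℝ (Fin n))}
    {g : EuclideanSpace ℝ (Fin n) → ℝ}
    (hg : ConvexOn ℝ s g) {lam : ℝ} (hlam : 0 < lam) (xhat : EuclideanSpace ℝ (Fin n))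
    {xs : EuclideanSpace ℝ (Fin n)} (hxs : xs ∈ s)
    (hmin : ∀ u ∈ s, g xs + ‖xs - xhat‖^2/(2*lam) ≤ g u + ‖u - xhat‖^2/(2*lam))
    {u : EuclideanSpace ℝ (Fin n)} (hu : u ∈ s) :
    g xs + ‖xs - xhat‖^2/(2*lam) + ‖u - xs‖^2/(2*lam) ≤ g u + ‖u - xhat‖^2/(2*lam) := by
  have hB0 : 0 ≤ g u + ‖u-xhat‖^2/(2*lam) - (g xs + ‖xs-xhat‖^2/(2*lam)) := by
    linarith [hmin u hu]
  have hstep : ∀ θ : ℝ, 0 < θ → θ ≤ 1 →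
      (1-θ)*(‖u - xs‖^2/(2*lam))
        ≤ g u + ‖u-xhat‖^2/(2*lam) - (g xs + ‖xs-xhat‖^2/(2*lam)) := by
    intro θ hθ0 hθ1
    set uθ := (1-θ) • xs + θ • u with huθ
    have hmem : uθ ∈ s := hg.1 hxs hu (by linarith) hθ0.le (by ring)
    have hgθ : g uθ ≤ (1-θ)*g xs + θ*g u := hg.2 hxs hu (by linarith) hθ0.le (by ring)
    have hm := hmin uθ hmem
    have hn : ‖uθ - xhat‖^2
        = (1-θ)*‖xs-xhat‖^2 + θ*‖u-xhat‖^2 - θ*(1-θ)*‖u - xs‖^2 := by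
      have hrw : uθ - xhat = (1-θ) • (xs - xhat) + θ • (u - xhat) := by
        rw [huθ]; module
      rw [hrw, norm_combo_aux]
      have hsimp : u - xhat - (xs - xhat) = u - xs := by abel
      rw [hsimp]
    rw [hn] at hm
    have key : θ*((1-θ)*(‖u - xs‖^2/(2*lam)))
        ≤ θ*(g u + ‖u-xhat‖^2/(2*lam) - (g xs + ‖xs-xhat‖^2/(2*lam))) := by
      ring_nf at hm hgθ ⊢
      linarith [hm, hgθ]
    exact le_of_mul_le_mul_left key hθ0
  by_contra hcon
  push_neg at hcon
  have hAB : g u + ‖u-xhat‖^2/(2*lam) - (g xs + ‖xs-xhat‖^2/(2*lam))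
      < ‖u - xs‖^2/(2*lam) := by linarith
  set A := ‖u - xs‖^2/(2*lam) with hA
  set B := g u + ‖u-xhat‖^2/(2*lam) - (g xs + ‖xs-xhat‖^2/(2*lam)) with hB
  have hA0 : 0 < A := lt_of_le_of_lt hB0 hAB
  have hθ0 : 0 < (A-B)/(2*A) := div_pos (by linarith) (by linarith)
  have hθ1 : (A-B)/(2*A) ≤ 1 := by rw [div_le_one (by linarith)]; linarith
  have hstepθ := hstep _ hθ0 hθ1
  have heq : (1-(A-B)/(2*A))*A = (A+B)/2 := by
    field_simp
    ring
  rw [heq] at hstepθ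
  linarith

/-- Lemma `lem:tj`: within a cycle of U-PB with stepsize `lam`,
prox-center `xhat` and first iteration `i`, if `t j > (1−χ)ε̄/2` then
`j − i < (1 + u_λ)·log(4 t_i / ((1−χ)ε̄))`. -/
theorem upb_null_iterations_bound
    {n : ℕ} (f h : EuclideanSpace ℝ (Fin n) → ℝ)
    (domf domh : Set (EuclideanSpace ℝ (Fin n)))
    (f' : EuclideanSpace ℝ (Fin n) → EuclideanSpace ℝ (Fin n))
    (Mf Lf : ℝ) (hMf : 0 ≤ Mf) (hLf : 0 ≤ Lf)
    (hsub : domh ⊆ domf)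
    (hfconv : ConvexOn ℝ domf f) (hhconv : ConvexOn ℝ domh h)
    (hflsc : LowerSemicontinuousOn f domf) (hhlsc : LowerSemicontinuousOn h domh)
    (horacle : ∀ x ∈ domh, ∀ u ∈ domf, f x + ⟪f' x, u - x⟫ ≤ f u)
    (hhybrid : ∀ x ∈ domh, ∀ y ∈ domh, ‖f' x - f' y‖ ≤ 2 * Mf + Lf * ‖x - y‖)
    (χ ε lam : ℝ) (hχ0 : 0 ≤ χ) (hχ1 : χ < 1) (hε : 0 < ε) (hlam : 0 < lam)
    (xhat : EuclideanSpace ℝ (Fin n)) (hxhat : xhat ∈ domh)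
    (i j : ℕ) (hij : i ≤ j)
    -- the iterations of the cycle
    (F : ℕ → EuclideanSpace ℝ (Fin n) → ℝ)
    (x : ℕ → EuclideanSpace ℝ (Fin n)) (φb t : ℕ → ℝ)
    (hFconv : ∀ l, i ≤ l → l ≤ j → ConvexOn ℝ domf (F l))
    (hFle : ∀ l, i ≤ l → l ≤ j → ∀ u ∈ domf, F l u ≤ f u)
    (hxdom : ∀ l, i ≤ l → l ≤ j → x l ∈ domh)
    (hxmin : ∀ l, i ≤ l → l ≤ j → ∀ u ∈ domh,
      F l (x l) + h (x l) + ‖x l - xhat‖ ^ 2 / (2 * lam)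
        ≤ F l u + h u + ‖u - xhat‖ ^ 2 / (2 * lam))
    (hφbi : φb i = f (x i) + h (x i) + χ / (2 * lam) * ‖x i - xhat‖ ^ 2)
    (hφbrec : ∀ l, i ≤ l → l < j →
      φb (l + 1) = min (φb l)
        (f (x (l + 1)) + h (x (l + 1)) + χ / (2 * lam) * ‖x (l + 1) - xhat‖ ^ 2))
    (ht : ∀ l, i ≤ l → l ≤ j →
      t l = φb l - (F l (x l) + h (x l) + ‖x l - xhat‖ ^ 2 / (2 * lam)))
    (hbundle : ∀ l, i ≤ l → l < j →
      ∃ fbar : EuclideanSpace ℝ (Fin n) → ℝ,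
        ConvexOn ℝ domf fbar ∧ (∀ u ∈ domf, fbar u ≤ f u) ∧
        fbar (x l) = F l (x l) ∧
        (∀ u ∈ domh, fbar (x l) + h (x l) + ‖x l - xhat‖ ^ 2 / (2 * lam)
          ≤ fbar u + h u + ‖u - xhat‖ ^ 2 / (2 * lam)) ∧
        (∀ u ∈ domf, fbar u ≤ F (l + 1) u) ∧
        (∀ u ∈ domf, f (x l) + ⟪f' (x l), u - x l⟫ ≤ F (l + 1) u))
    (ulam : ℝ)
    (hulam : ulam = 4 * lam * (2 * Mf ^ 2 + (1 - χ) * ε * Lf) / ((1 - χ) * ε))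
    (hgap : (1 - χ) * ε / 2 < t j) :
    ((j : ℝ) - (i : ℝ)) < (1 + ulam) * Real.log (4 * t i / ((1 - χ) * ε)) := by
  have hs : 0 < (1-χ)*ε := mul_pos (by linarith) hε
  have h2l : 0 < 2*lam := by linarith
  set c := (1-χ)*ε/4 with hcdef
  have hcpos : 0 < c := by rw [hcdef]; linarith
  have hu0 : 0 ≤ ulam := by
    rw [hulam]
    apply div_nonneg _ hs.le
    nlinarith [mul_nonneg hs.le hLf, sq_nonneg Mf, hlam.le]
  have h1u : (0:ℝ) < 1 + ulam := by linarith
  set θ := 1/(1+ulam) with hθdef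
  set τ := ulam/(1+ulam) with hτdef
  have hθ0 : 0 < θ := by rw [hθdef]; exact one_div_pos.mpr h1u
  have hθnn : 0 ≤ θ := hθ0.le
  have hθ1 : θ ≤ 1 := by rw [hθdef, div_le_one h1u]; linarith
  have h1θ : 1 - θ = τ := by rw [hθdef, hτdef]; field_simp; ring
  have hτnn : 0 ≤ τ := div_nonneg hu0 h1u.le
  have hθu : θ * ulam = 1 - θ := by rw [hθdef]; field_simp; ring
  have G : ∀ d : ℝ, 2*Mf*d + Lf*d^2 ≤ c + ulam*(d^2/(2*lam)) := by
    intro d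
    have husq : ulam*(d^2/(2*lam)) = 2*(2*Mf^2+(1-χ)*ε*Lf)*d^2/((1-χ)*ε) := by
      rw [hulam]; field_simp; ring
    rw [husq, hcdef, ← sub_nonneg]
    have hexp : (1-χ)*ε/4 + 2*(2*Mf^2+(1-χ)*ε*Lf)*d^2/((1-χ)*ε) - (2*Mf*d+Lf*d^2)
        = (((1-χ)*ε/2 - 2*Mf*d)^2 + ((1-χ)*ε)*Lf*d^2)/((1-χ)*ε) := by
      have h1χne : (1:ℝ) - χ ≠ 0 := (sub_pos.mpr hχ1).ne'
      have hεne : ε ≠ 0 := hε.ne'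
      field_simp; ring
    rw [hexp]
    apply div_nonneg _ hs.le
    exact add_nonneg (sq_nonneg _) (mul_nonneg (mul_nonneg hs.le hLf) (sq_nonneg d))
  have key : ∀ l, i ≤ l → l < j → t (l+1) - c ≤ τ * (t l - c) := by
    intro l hil hlj
    obtain ⟨fbar, hfbc, hfbf, hfbx, hfbmin, hfbF, hlinF⟩ := hbundle l hil hlj
    have hxl : x l ∈ domh := hxdom l hil hlj.le
    have hxp : x (l+1) ∈ domh := hxdom (l+1) (by omega) (by omega)
    have hxlf : x l ∈ domf := hsub hxl
    have hxpf : x (l+1) ∈ domf := hsub hxp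
    have hor := horacle (x (l+1)) hxp (x l) hxlf
    have hcs := real_inner_le_norm (f' (x (l+1)) - f' (x l)) (x (l+1) - x l)
    have hhy := hhybrid (x (l+1)) hxp (x l) hxl
    have hprod : ‖f' (x (l+1)) - f' (x l)‖ * ‖x (l+1) - x l‖
        ≤ (2*Mf + Lf*‖x (l+1) - x l‖) * ‖x (l+1) - x l‖ :=
      mul_le_mul_of_nonneg_right hhy (norm_nonneg _)
    have hi1 : ⟪f' (x (l+1)) - f' (x l), x (l+1) - x l⟫
        = ⟪f' (x (l+1)), x (l+1) - x l⟫ - ⟪f' (x l), x (l+1) - x l⟫ :=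
      inner_sub_left _ _ _
    have hi2 : ⟪f' (x (l+1)), x l - x (l+1)⟫ = -⟪f' (x (l+1)), x (l+1) - x l⟫ := by
      rw [show x l - x (l+1) = -(x (l+1) - x l) by abel, inner_neg_right]
    have h4 : f (x (l+1)) - 2*Mf*‖x (l+1) - x l‖ - Lf*‖x (l+1) - x l‖^2
        ≤ f (x l) + ⟪f' (x l), x (l+1) - x l⟫ := by
      ring_nf at hor hcs hprod hi1 hi2 ⊢
      linarith [hor, hcs, hprod, hi1, hi2]
    have hgconv : ConvexOn ℝ domh (fun u => fbar u + h u) :=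
      ConvexOn.add (hfbc.subset hsub hhconv.1) hhconv
    have h3 : fbar (x l) + h (x l) + ‖x l - xhat‖^2/(2*lam) + ‖x (l+1) - x l‖^2/(2*lam)
        ≤ fbar (x (l+1)) + h (x (l+1)) + ‖x (l+1) - xhat‖^2/(2*lam) :=
      three_point_aux hgconv hlam xhat hxl (fun u hu => hfbmin u hu) hxp
    rw [hfbx] at h3
    have hF1 := hlinF (x (l+1)) hxpf
    have hF2 := hfbF (x (l+1)) hxpf
    have hmin1 : φb (l+1) ≤ φb l := by
      rw [hφbrec l hil hlj]; exact min_le_left _ _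
    have hmin2 : φb (l+1) ≤ f (x (l+1)) + h (x (l+1)) + χ/(2*lam)*‖x (l+1) - xhat‖^2 := by
      rw [hφbrec l hil hlj]; exact min_le_right _ _
    have hA5 : χ/(2*lam)*‖x (l+1) - xhat‖^2 ≤ ‖x (l+1) - xhat‖^2/(2*lam) := by
      have hN : (0:ℝ) ≤ ‖x (l+1) - xhat‖^2 := by positivity
      calc χ/(2*lam)*‖x (l+1) - xhat‖^2 ≤ 1/(2*lam)*‖x (l+1) - xhat‖^2 := by
            gcongr <;> linarith
        _ = ‖x (l+1) - xhat‖^2/(2*lam) := by ring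
    have A1 : φb (l+1) ≤ (1-θ)*φb l
        + θ*(f (x (l+1)) + h (x (l+1)) + χ/(2*lam)*‖x (l+1) - xhat‖^2) := by
      have s1 := mul_le_mul_of_nonneg_left hmin1 (by linarith : (0:ℝ) ≤ 1-θ)
      have s2 := mul_le_mul_of_nonneg_left hmin2 hθnn
      ring_nf at s1 s2 ⊢
      linarith [s1, s2]
    have A2 : θ*(f (x l) + ⟪f' (x l), x (l+1) - x l⟫) + (1-θ)*fbar (x (l+1))
        ≤ F (l+1) (x (l+1)) := by
      have s1 := mul_le_mul_of_nonneg_left hF1 hθnn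
      have s2 := mul_le_mul_of_nonneg_left hF2 (by linarith : (0:ℝ) ≤ 1-θ)
      ring_nf at s1 s2 ⊢
      linarith [s1, s2]
    have A3 := mul_le_mul_of_nonneg_left h3 (by linarith : (0:ℝ) ≤ 1-θ)
    have A4 := mul_le_mul_of_nonneg_left h4 hθnn
    have A5 := mul_le_mul_of_nonneg_left hA5 hθnn
    have A6 : θ*(2*Mf*‖x (l+1) - x l‖ + Lf*‖x (l+1) - x l‖^2)
        ≤ θ*c + (1-θ)*(‖x (l+1) - x l‖^2/(2*lam)) := by
      have s1 := mul_le_mul_of_nonneg_left (G (‖x (l+1) - x l‖)) hθnn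
      have s2 : θ*(ulam*(‖x (l+1) - x l‖^2/(2*lam)))
          = (1-θ)*(‖x (l+1) - x l‖^2/(2*lam)) := by rw [← hθu]; ring
      ring_nf at s1 s2 ⊢
      linarith [s1, s2]
    rw [ht (l+1) (by omega) (by omega), ht l hil hlj.le, ← h1θ]
    ring_nf at A1 A2 A3 A4 A5 A6 ⊢
    linarith [A1, A2, A3, A4, A5, A6]
  have hiter : ∀ k : ℕ, i + k ≤ j → t (i+k) - c ≤ τ^k * (t i - c) := by
    intro k
    induction k with
    | zero => intro _; simp
    | succ m ih =>
      intro hm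
      have h1 := ih (by omega)
      have h2 : t (i + (m+1)) - c ≤ τ * (t (i+m) - c) := key (i+m) (by omega) (by omega)
      have h3 := mul_le_mul_of_nonneg_left h1 hτnn
      calc t (i+(m+1)) - c ≤ τ * (t (i+m) - c) := h2
        _ ≤ τ * (τ^m * (t i - c)) := h3
        _ = τ^(m+1) * (t i - c) := by ring
  set k := j - i with hkdef
  have hjk : j = i + k := by omega
  have hTj : t j - c ≤ τ^k * (t i - c) := by rw [hjk]; exact hiter k (by omega)
  have h2c : 2*c < t j := by
    have h2c' : 2*c = (1-χ)*ε/2 := by rw [hcdef]; ring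
    linarith
  have hτkc : 0 ≤ τ^k * c := mul_nonneg (pow_nonneg hτnn k) hcpos.le
  have hchain : c < τ^k * t i := by
    ring_nf at hTj hτkc ⊢
    linarith [hTj, h2c, hτkc]
  have harg : 4 * t i / ((1-χ)*ε) = t i / c := by
    rw [hcdef]; field_simp
  rw [harg]
  rcases Nat.eq_zero_or_pos k with hk0 | hkpos
  · have hji : ((j:ℝ) - i) = 0 := by
      have hji' : j = i := by omega
      rw [hji']; ring
    rw [hji]
    apply mul_pos h1u
    apply Real.log_pos
    rw [one_lt_div hcpos]
    have hci : c < t i := by simpa [hk0] using hchain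
    linarith
  · have hτpos : 0 < τ := by
      rcases eq_or_lt_of_le hτnn with h0 | h0
      · exfalso
        have hz : τ^k = 0 := by rw [← h0]; exact zero_pow (by omega)
        rw [hz] at hchain
        simp at hchain
        linarith
      · exact h0
    have hti : 0 < t i := by
      by_contra hh; push_neg at hh
      have hle : τ^k * t i ≤ 0 := mul_nonpos_of_nonneg_of_nonpos (pow_nonneg hτnn k) hh
      linarith
    have hlog1 : Real.log c < Real.log (τ^k * t i) := Real.log_lt_log hcpos hchain
    have hlog2 : Real.log (τ^k * t i) = k * Real.log τ + Real.log (t i) := by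
      rw [Real.log_mul (by positivity) (ne_of_gt hti), Real.log_pow]
    have hlogτ : Real.log τ ≤ -(1/(1+ulam)) := by
      have hl := Real.log_le_sub_one_of_pos hτpos
      have he : τ - 1 = -(1/(1+ulam)) := by rw [hτdef]; field_simp; ring
      linarith
    have hkc : (0:ℝ) ≤ (k:ℝ) := Nat.cast_nonneg k
    have hscale : (k:ℝ) * (1/(1+ulam)) ≤ (k:ℝ) * (-(Real.log τ)) :=
      mul_le_mul_of_nonneg_left (by linarith) hkc
    have hlogdiv : Real.log (t i / c) = Real.log (t i) - Real.log c :=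
      Real.log_div (ne_of_gt hti) (ne_of_gt hcpos)
    have hfin : (k:ℝ) * (1/(1+ulam)) < Real.log (t i / c) := by
      rw [hlogdiv]
      ring_nf at hlog1 hlog2 hscale ⊢
      linarith [hlog1, hlog2, hscale]
    have hcast : ((j:ℝ) - i) = (k:ℝ) := by rw [hjk]; push_cast; ring
    rw [hcast]
    have hdiv : (k:ℝ)/(1+ulam) < Real.log (t i / c) := by
      rw [div_eq_mul_one_div]; exact hfin
    have hmul := (div_lt_iff₀ h1u).mp hdiv
    ring_nf at hmul ⊢
    linarith [hmul]
end

section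
/- If the stepsize satisfies 2λL_f ≤ 1 − χ, then t_i ≤ 4λM_f²/(1−χ). -/
open scoped RealInnerProductSpace

lemma gauss_sum_real (N : ℕ) : ∑ k ∈ Finset.range N, ((k : ℝ) + 1) = N * (N + 1) / 2 := by
  induction N with
  | zero => simp
  | succ m ih => rw [Finset.sum_range_succ, ih]; push_cast; ring

/-- Lemma `lem:tj2`(a): at the first iteration `i` of a cycle of U-PB,
if `2λL_f ≤ 1 − χ` then `t_i ≤ 4λM_f²/(1−χ)`. -/
theorem upb_first_gap_bound_small_stepsize
    {n : ℕ} (f h : EuclideanSpace ℝ (Fin n) → ℝ)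
    (domf domh : Set (EuclideanSpace ℝ (Fin n)))
    (f' : EuclideanSpace ℝ (Fin n) → EuclideanSpace ℝ (Fin n))
    (Mf Lf : ℝ) (hMf : 0 ≤ Mf) (hLf : 0 ≤ Lf)
    (hsub : domh ⊆ domf)
    (hfconv : ConvexOn ℝ domf f) (hhconv : ConvexOn ℝ domh h)
    (hflsc : LowerSemicontinuousOn f domf) (hhlsc : LowerSemicontinuousOn h domh)
    (horacle : ∀ x ∈ domh, ∀ u ∈ domf, f x + ⟪f' x, u - x⟫ ≤ f u)
    (hhybrid : ∀ x ∈ domh, ∀ y ∈ domh, ‖f' x - f' y‖ ≤ 2 * Mf + Lf * ‖x - y‖)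
    (χ lam : ℝ) (hχ0 : 0 ≤ χ) (hχ1 : χ < 1) (hlam : 0 < lam)
    (xhat : EuclideanSpace ℝ (Fin n)) (hxhat : xhat ∈ domh)
    (fi : EuclideanSpace ℝ (Fin n) → ℝ)
    (hficonv : ConvexOn ℝ domf fi)
    (hfilow : ∀ u ∈ domf, f xhat + ⟪f' xhat, u - xhat⟫ ≤ fi u)
    (hfile : ∀ u ∈ domf, fi u ≤ f u)
    (xi : EuclideanSpace ℝ (Fin n)) (hxi : xi ∈ domh)
    (hximin : ∀ u ∈ domh,
      fi xi + h xi + ‖xi - xhat‖ ^ 2 / (2 * lam)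
        ≤ fi u + h u + ‖u - xhat‖ ^ 2 / (2 * lam))
    (ti : ℝ)
    (hti : ti = f xi + h xi + χ / (2 * lam) * ‖xi - xhat‖ ^ 2
      - (fi xi + h xi + ‖xi - xhat‖ ^ 2 / (2 * lam)))
    (hstep : 2 * lam * Lf ≤ 1 - χ) :
    ti ≤ 4 * lam * Mf ^ 2 / (1 - χ) := by
  set r := ‖xi - xhat‖ with hrdef
  have hr0 : 0 ≤ r := norm_nonneg _
  -- Key descent bound for each N
  have key : ∀ N : ℕ, 0 < N →
      f xi - f xhat - ⟪f' xhat, xi - xhat⟫ ≤ 2 * Mf * r + Lf * r ^ 2 * (((N : ℝ) + 1) / (2 * N)) := by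
    intro N hN
    have hNR : (0 : ℝ) < N := by exact_mod_cast hN
    set d := xi - xhat with hd
    set x : ℕ → EuclideanSpace ℝ (Fin n) := fun k => xhat + ((k : ℝ) / N) • d with hx
    have hmem : ∀ k, k ≤ N → x k ∈ domh := by
      intro k hk
      have ht0 : (0 : ℝ) ≤ (k : ℝ) / N := by positivity
      have ht1 : (k : ℝ) / N ≤ 1 := by
        rw [div_le_one hNR]; exact_mod_cast hk
      have hmem' := hhconv.1 hxhat hxi (by linarith : (0 : ℝ) ≤ 1 - (k : ℝ) / N) ht0 (by ring)
      have heq : (1 - (k : ℝ) / N) • xhat + ((k : ℝ) / N) • xi = x k := by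
        simp only [hx, hd]; module
      rwa [heq] at hmem'
    have hstepvec : ∀ k : ℕ, x (k + 1) - x k = ((1 : ℝ) / N) • d := by
      intro k
      simp only [hx]
      push_cast
      module
    have hstepnorm : ∀ k : ℕ, ‖x (k + 1) - x k‖ = 1 / N * r := by
      intro k
      rw [hstepvec k, norm_smul, Real.norm_eq_abs, abs_of_nonneg (by positivity)]
    have hdistnorm : ∀ k : ℕ, ‖x (k + 1) - xhat‖ = ((k : ℝ) + 1) / N * r := by
      intro k
      have hv : x (k + 1) - xhat = (((k : ℝ) + 1) / N) • d := by
        simp only [hx]; push_cast; module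
      rw [hv, norm_smul, Real.norm_eq_abs, abs_of_nonneg (by positivity)]
    set G : ℕ → ℝ := fun k => f (x k) - ⟪f' xhat, x k⟫ with hG
    have hterm : ∀ k ∈ Finset.range N,
        G (k + 1) - G k ≤ 2 * Mf * r / N + Lf * r ^ 2 * ((k : ℝ) + 1) / N ^ 2 := by
      intro k hk
      have hkN : k < N := Finset.mem_range.mp hk
      have hm1 : x (k + 1) ∈ domh := hmem (k + 1) (by omega)
      have hm0 : x k ∈ domh := hmem k (by omega)
      have h1 := horacle (x (k + 1)) hm1 (x k) (hsub hm0)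
      have e1 : ⟪f' (x (k + 1)), x k - x (k + 1)⟫ = -⟪f' (x (k + 1)), x (k + 1) - x k⟫ := by
        rw [← inner_neg_right]; congr 1; abel
      have h2 : f (x (k + 1)) - f (x k) ≤ ⟪f' (x (k + 1)), x (k + 1) - x k⟫ := by
        rw [e1] at h1; linarith
      have h3 : ⟪f' (x (k + 1)) - f' xhat, x (k + 1) - x k⟫
          ≤ (2 * Mf + Lf * (((k : ℝ) + 1) / N * r)) * (1 / N * r) := by
        calc ⟪f' (x (k + 1)) - f' xhat, x (k + 1) - x k⟫
            ≤ ‖f' (x (k + 1)) - f' xhat‖ * ‖x (k + 1) - x k‖ := real_inner_le_norm _ _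
          _ ≤ (2 * Mf + Lf * (((k : ℝ) + 1) / N * r)) * (1 / N * r) := by
              rw [hstepnorm k]
              apply mul_le_mul _ le_rfl (by positivity) (by positivity)
              have := hhybrid (x (k + 1)) hm1 xhat hxhat
              rwa [hdistnorm k] at this
      have e2 : ⟪f' (x (k + 1)) - f' xhat, x (k + 1) - x k⟫
          = ⟪f' (x (k + 1)), x (k + 1) - x k⟫ - ⟪f' xhat, x (k + 1) - x k⟫ :=
        inner_sub_left _ _ _
      have e3 : ⟪f' xhat, x (k + 1) - x k⟫ = ⟪f' xhat, x (k + 1)⟫ - ⟪f' xhat, x k⟫ :=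
        inner_sub_right _ _ _
      have hGk : G (k + 1) - G k
          = f (x (k + 1)) - f (x k) - ⟪f' xhat, x (k + 1) - x k⟫ := by
        simp only [hG]; rw [e3]; ring
      have hfin : G (k + 1) - G k ≤ (2 * Mf + Lf * (((k : ℝ) + 1) / N * r)) * (1 / N * r) := by
        rw [hGk]
        linarith [h2, h3, e2.symm.le, e2.le]
      have : (2 * Mf + Lf * (((k : ℝ) + 1) / N * r)) * (1 / N * r)
          = 2 * Mf * r / N + Lf * r ^ 2 * ((k : ℝ) + 1) / N ^ 2 := by
        field_simp
      linarith [hfin, this.le]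
    have htel := Finset.sum_range_sub G N
    have hsumle : G N - G 0 ≤ ∑ k ∈ Finset.range N,
        (2 * Mf * r / N + Lf * r ^ 2 * ((k : ℝ) + 1) / N ^ 2) := by
      rw [← htel]
      exact Finset.sum_le_sum hterm
    have hsumval : ∑ k ∈ Finset.range N,
        (2 * Mf * r / N + Lf * r ^ 2 * ((k : ℝ) + 1) / N ^ 2)
        = 2 * Mf * r + Lf * r ^ 2 * (((N : ℝ) + 1) / (2 * N)) := by
      rw [Finset.sum_add_distrib, Finset.sum_const, Finset.card_range]
      have h4 : ∑ k ∈ Finset.range N, Lf * r ^ 2 * ((k : ℝ) + 1) / N ^ 2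
          = Lf * r ^ 2 / N ^ 2 * ∑ k ∈ Finset.range N, ((k : ℝ) + 1) := by
        rw [Finset.mul_sum]
        exact Finset.sum_congr rfl (fun k _ => by ring)
      rw [h4, gauss_sum_real]
      rw [nsmul_eq_mul]
      field_simp
    have hxN : x N = xi := by
      simp only [hx, hd]
      rw [div_self hNR.ne']
      module
    have hx0 : x 0 = xhat := by
      simp only [hx]
      norm_num
    have hGN : G N - G 0 = f xi - f xhat - ⟪f' xhat, xi - xhat⟫ := by
      simp only [hG, hxN, hx0]
      rw [inner_sub_right]
      ring
    rw [hGN, hsumval] at hsumle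
    exact hsumle
  -- pass to the limit N → ∞
  have hconv2 : Filter.Tendsto (fun N : ℕ => (1 : ℝ) / 2 + (1 / 2) / (N : ℝ))
      Filter.atTop (nhds (1 / 2 + 0)) :=
    Filter.Tendsto.add tendsto_const_nhds (tendsto_const_div_atTop_nhds_zero_nat (1 / 2))
  have heq : ∀ᶠ N : ℕ in Filter.atTop,
      (1 : ℝ) / 2 + (1 / 2) / (N : ℝ) = ((N : ℝ) + 1) / (2 * N) := by
    filter_upwards [Filter.eventually_gt_atTop 0] with N hN
    have hNR : (0 : ℝ) < N := by exact_mod_cast hN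
    field_simp
  have hconv3 : Filter.Tendsto (fun N : ℕ => ((N : ℝ) + 1) / (2 * N))
      Filter.atTop (nhds (1 / 2)) := by
    have := Filter.Tendsto.congr' heq hconv2
    simpa using this
  have hconv4 : Filter.Tendsto
      (fun N : ℕ => 2 * Mf * r + Lf * r ^ 2 * (((N : ℝ) + 1) / (2 * N)))
      Filter.atTop (nhds (2 * Mf * r + Lf * r ^ 2 * (1 / 2))) :=
    Filter.Tendsto.add tendsto_const_nhds (Filter.Tendsto.const_mul _ hconv3)
  have main : f xi - f xhat - ⟪f' xhat, xi - xhat⟫ ≤ 2 * Mf * r + Lf * r ^ 2 * (1 / 2) := by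
    apply ge_of_tendsto hconv4
    filter_upwards [Filter.eventually_gt_atTop 0] with N hN using key N hN
  have hfi := hfilow xi (hsub hxi)
  have hkey2 : f xi - fi xi ≤ 2 * Mf * r + Lf * r ^ 2 / 2 := by linarith
  have hc : (0 : ℝ) < 1 - χ := by linarith
  have hfinal : 2 * Mf * r + Lf * r ^ 2 / 2 - (1 - χ) / (2 * lam) * r ^ 2
      ≤ 4 * lam * Mf ^ 2 / (1 - χ) := by
    have hLle : Lf ≤ (1 - χ) / (2 * lam) := by
      rw [le_div_iff₀ (by positivity)]; linarith
    have h2 : Lf * r ^ 2 / 2 ≤ (1 - χ) / (2 * lam) * r ^ 2 / 2 := by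
      have := mul_le_mul_of_nonneg_right hLle (sq_nonneg r)
      linarith
    have e1 : (1 - χ) / (2 * lam) * r ^ 2 / 2 = (1 - χ) / (4 * lam) * r ^ 2 := by ring
    have e2 : 2 * Mf * r - (1 - χ) / (4 * lam) * r ^ 2 ≤ 4 * lam * Mf ^ 2 / (1 - χ) := by
      rw [le_div_iff₀ hc, sub_mul, ← sub_nonneg]
      have e3 : 4 * lam * Mf ^ 2 - (2 * Mf * r * (1 - χ) - (1 - χ) / (4 * lam) * r ^ 2 * (1 - χ))
          = ((1 - χ) * r - 4 * lam * Mf) ^ 2 / (4 * lam) := by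
        field_simp
        ring
      rw [e3]
      positivity
    linarith
  rw [hti]
  have hdec : f xi + h xi + χ / (2 * lam) * r ^ 2 - (fi xi + h xi + r ^ 2 / (2 * lam))
      = f xi - fi xi - (1 - χ) / (2 * lam) * r ^ 2 := by
    ring
  rw [hdec]
  linarith [hfinal, hkey2]
end

section
/- Let Q be a symmetric positive definite n×n real matrix and write ‖u‖_Q² := ⟨u, Qu⟩. Let ξ > 0 and let ψ : ℝⁿ → ℝ ∪ {+∞} be proper lower semicontinuous such that ψ − (ξ/2)‖·‖_Q² is convex. Let (y, v, η) ∈ dom ψ × ℝⁿ × [0,∞) satisfy v ∈ ∂_η ψ(y), i.e., ψ(u) ≥ ψ(y) + ⟨v, u − y⟩ − η for all u ∈ ℝⁿ. Then for every τ > 0 and every u ∈ ℝⁿ: ψ(u) ≥ ψ(y) + ⟨v, u − y⟩ − (1 + τ⁻¹)η + (ξ/(2(1+τ)))‖u − y‖_Q². -/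
open Matrix

/-- Lemma `lem:app`: strengthening of an `η`-subgradient inequality for a
function `ψ` that is strongly convex with respect to the quadratic form of a symmetric
positive definite matrix `Q`. -/
theorem eta_subgradient_strong_convexity
    {n : ℕ} (Q : Matrix (Fin n) (Fin n) ℝ) (hQ : Q.PosDef)
    (ξ : ℝ) (hξ : 0 < ξ)
    (ψ : (Fin n → ℝ) → ℝ) (domψ : Set (Fin n → ℝ))
    (hdom : domψ.Nonempty)
    (hlsc : LowerSemicontinuousOn ψ domψ)
    (hconv : ConvexOn ℝ domψ (fun u => ψ u - ξ / 2 * (u ⬝ᵥ Q.mulVec u)))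
    (y v : Fin n → ℝ) (η : ℝ) (hy : y ∈ domψ) (hη : 0 ≤ η)
    (hsub : ∀ u ∈ domψ, ψ y + v ⬝ᵥ (u - y) - η ≤ ψ u) :
    ∀ τ : ℝ, 0 < τ → ∀ u ∈ domψ,
      ψ y + v ⬝ᵥ (u - y) - (1 + τ⁻¹) * η
          + ξ / (2 * (1 + τ)) * ((u - y) ⬝ᵥ Q.mulVec (u - y))
        ≤ ψ u := by
  intro τ hτ u hu
  have hτ1 : (0:ℝ) < 1 + τ := by linarith
  set t : ℝ := τ / (1 + τ) with ht
  have ht0 : 0 < t := div_pos hτ hτ1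
  have ht1 : t < 1 := (div_lt_one hτ1).2 (by linarith)
  set z : Fin n → ℝ := (1 - t) • y + t • u with hzdef
  have hz : z ∈ domψ := hconv.1 hy hu (by linarith) ht0.le (by ring)
  have hφ := hconv.2 hy hu (by linarith : (0:ℝ) ≤ 1 - t) ht0.le (by ring)
  simp only [smul_eq_mul] at hφ
  have hsym : y ⬝ᵥ Q.mulVec u = u ⬝ᵥ Q.mulVec y := by
    have hQt : Qᵀ = Q := by
      have h := hQ.isHermitian.eq
      simpa [Matrix.conjTranspose, Matrix.map, Matrix.transpose] using h
    rw [Matrix.dotProduct_mulVec, ← Matrix.mulVec_transpose, hQt, dotProduct_comm]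
  have hz2 : z ⬝ᵥ Q.mulVec z = (1-t)^2 * (y ⬝ᵥ Q.mulVec y)
      + 2*(1-t)*t*(y ⬝ᵥ Q.mulVec u) + t^2 * (u ⬝ᵥ Q.mulVec u) := by
    simp only [hzdef, Matrix.mulVec_add, Matrix.mulVec_smul, dotProduct_add,
      add_dotProduct, smul_dotProduct, dotProduct_smul, smul_eq_mul, hsym]
    ring
  have hq2 : (u - y) ⬝ᵥ Q.mulVec (u - y)
      = u ⬝ᵥ Q.mulVec u - 2*(y ⬝ᵥ Q.mulVec u) + y ⬝ᵥ Q.mulVec y := by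
    simp only [Matrix.mulVec_sub, dotProduct_sub, sub_dotProduct, hsym]
    ring
  have hzsub := hsub z hz
  have hvz : v ⬝ᵥ (z - y) = t * (v ⬝ᵥ (u - y)) := by
    have hzy : z - y = t • (u - y) := by
      ext i; simp [hzdef, smul_eq_mul]; ring
    rw [hzy, dotProduct_smul, smul_eq_mul]
  rw [hvz] at hzsub
  have key : t * ψ y + t * (v ⬝ᵥ (u - y)) - η
      + ξ/2 * t * (1-t) * ((u - y) ⬝ᵥ Q.mulVec (u - y)) ≤ t * ψ u := by
    rw [hq2]; nlinarith [hφ, hzsub, hz2, hq2]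
  have hmul : t * (1 + τ⁻¹) = 1 := by
    rw [ht]; field_simp; ring
  have hξt : t * (ξ / (2 * (1 + τ))) = ξ/2 * t * (1 - t) := by
    rw [ht]; field_simp; ring
  have heq : t * (ψ y + v ⬝ᵥ (u - y) - (1 + τ⁻¹) * η
      + ξ / (2 * (1 + τ)) * ((u - y) ⬝ᵥ Q.mulVec (u - y)))
      = t * ψ y + t * (v ⬝ᵥ (u - y)) - η
      + ξ/2 * t * (1-t) * ((u - y) ⬝ᵥ Q.mulVec (u - y)) := by
    linear_combination (-η) * hmul + ((u - y) ⬝ᵥ Q.mulVec (u - y)) * hξt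
  rw [← mul_le_mul_iff_right₀ ht0, heq]
  linarith [key]
end

section
/- Let k ≥ 1 and let real numbers {γ_j}_{j=1}^k, {η_j}_{j=1}^k, {α_j}_{j=0}^k, σ ≥ 0, δ ≥ 0, and γ̲ > 0 satisfy γ_j ≥ γ̲ and γ_jη_j ≤ α_{j−1} − (1+σ)α_j + γ_jδ for every j = 1, …, k. Then min over 1 ≤ j ≤ k of η_j ≤ (α₀ − (1+σ)^k α_k) / (Σ_{j=1}^k (1+σ)^{j−1} γ_j) + δ. -/
/-!
Weighting the `j`-th inequality by `(1+σ)^{j-1}` makes the `α`-terms telescope to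
`α₀ - (1+σ)^k α_k`, so the weighted average of the `η_j`, with weights `(1+σ)^{j-1} γ_j > 0`,
is at most the right-hand side; some `η_j` is at most that average.
-/

open Finset

theorem Finset.sum_Icc_pow_mul_sub_mul_eq {R : Type*} [CommRing R] (r : R) (a : ℕ → R)
    (k : ℕ) :
    ∑ i ∈ Icc 1 k, r ^ (i - 1) * (a (i - 1) - r * a i) = a 0 - r ^ k * a k := by
  induction k with
  | zero => simp
  | succ k ih =>
    rw [sum_Icc_succ_top (by omega), ih, Nat.add_sub_cancel, pow_succ]
    ring

theorem Finset.exists_le_of_weighted_sum_le {ι R : Type*} [Semiring R] [LinearOrder R]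
    [IsStrictOrderedRing R] {s : Finset ι} (hs : s.Nonempty) {w f : ι → R} {B : R}
    (hw : ∀ i ∈ s, 0 < w i) (h : ∑ i ∈ s, w i * f i ≤ ∑ i ∈ s, w i * B) :
    ∃ i ∈ s, f i ≤ B := by
  obtain ⟨i, hi, hle⟩ := exists_le_of_sum_le hs h
  exact ⟨i, hi, le_of_mul_le_mul_left hle (hw i hi)⟩

theorem easy_recursion_min_bound_general
    (k : ℕ) (hk : 1 ≤ k) (γ η α : ℕ → ℝ) (σ δ γl : ℝ)
    (hσ : 0 ≤ σ) (hγl : 0 < γl)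
    (hγ : ∀ j, 1 ≤ j → j ≤ k → γl ≤ γ j)
    (hrec : ∀ j, 1 ≤ j → j ≤ k → γ j * η j ≤ α (j - 1) - (1 + σ) * α j + γ j * δ) :
    ∃ j, 1 ≤ j ∧ j ≤ k ∧
      η j ≤ (α 0 - (1 + σ) ^ k * α k) / (∑ i ∈ Finset.Icc 1 k, (1 + σ) ^ (i - 1) * γ i)
        + δ := by
  set w : ℕ → ℝ := fun i ↦ (1 + σ) ^ (i - 1) * γ i
  set B := (α 0 - (1 + σ) ^ k * α k) / ∑ i ∈ Icc 1 k, w i + δ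
  have hw : ∀ i ∈ Icc 1 k, 0 < w i := fun i hi ↦ by
    rw [mem_Icc] at hi
    exact mul_pos (by positivity) (hγl.trans_le (hγ i hi.1 hi.2))
  have hne : (Icc 1 k).Nonempty := nonempty_Icc.2 hk
  have hweighted : ∀ i ∈ Icc 1 k,
      w i * η i ≤ (1 + σ) ^ (i - 1) * (α (i - 1) - (1 + σ) * α i) + w i * δ := fun i hi ↦ by
    rw [mem_Icc] at hi
    have hpow : (0 : ℝ) ≤ (1 + σ) ^ (i - 1) := by positivity
    have := mul_le_mul_of_nonneg_left (hrec i hi.1 hi.2) hpow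
    linarith
  have hsum : ∑ i ∈ Icc 1 k, w i * η i ≤ ∑ i ∈ Icc 1 k, w i * B := by
    rw [← sum_mul, mul_add, mul_div_cancel₀ _ (sum_pos hw hne).ne', sum_mul,
      ← sum_Icc_pow_mul_sub_mul_eq, ← sum_add_distrib]
    exact sum_le_sum hweighted
  obtain ⟨j, hj, hηj⟩ := exists_le_of_weighted_sum_le hne hw hsum
  exact ⟨j, (mem_Icc.1 hj).1, (mem_Icc.1 hj).2, hηj⟩

/-- Lemma `lm:easyrecur1`(a): a recursive estimate for sequences
satisfying `γ_j η_j ≤ α_{j−1} − (1+σ)α_j + γ_j δ`. -/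
theorem easy_recursion_min_bound
    (k : ℕ) (hk : 1 ≤ k) (γ η α : ℕ → ℝ) (σ δ γl : ℝ)
    (hσ : 0 ≤ σ) (hδ : 0 ≤ δ) (hγl : 0 < γl)
    (hγ : ∀ j, 1 ≤ j → j ≤ k → γl ≤ γ j)
    (hrec : ∀ j, 1 ≤ j → j ≤ k → γ j * η j ≤ α (j - 1) - (1 + σ) * α j + γ j * δ) :
    ∃ j, 1 ≤ j ∧ j ≤ k ∧
      η j ≤ (α 0 - (1 + σ) ^ k * α k) / (∑ i ∈ Finset.Icc 1 k, (1 + σ) ^ (i - 1) * γ i)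
        + δ :=
  easy_recursion_min_bound_general k hk γ η α σ δ γl hσ hγl hγ hrec
end

section
/- Let real sequences {γ_j}, {η_j}, {α_j} and constants σ ≥ 0, δ > 0, γ̲ > 0 satisfy, for every j ≥ 1: γ_j ≥ γ̲, α_j ≥ 0, and γ_jη_j ≤ α_{j−1} − (1+σ)α_j + γ_jδ. Then min over 1 ≤ j ≤ k of η_j ≤ 2δ for every integer k ≥ 1 such that k ≥ min{ ((1+σ)/σ)·log(σα₀/(γ̲δ) + 1), α₀/(γ̲δ) }, where log is the natural logarithm and, when σ = 0, the first term in the min is interpreted as α₀/(γ̲δ). -/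
/-- Lemma `lm:easyrecur1`(b): if moreover the `α_j` are nonnegative,
then `min_{1 ≤ j ≤ k} η_j ≤ 2δ` for every `k` at least
`min{((1+σ)/σ)·log(σα₀/(γ̲δ) + 1), α₀/(γ̲δ)}`, the first term being interpreted as
`α₀/(γ̲δ)` when `σ = 0`. -/
theorem easy_recursion_iteration_bound
    (γ η α : ℕ → ℝ) (σ δ γl : ℝ)
    (hσ : 0 ≤ σ) (hδ : 0 < δ) (hγl : 0 < γl)
    (hγ : ∀ j, 1 ≤ j → γl ≤ γ j)
    (hα : ∀ j, 0 ≤ α j)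
    (hrec : ∀ j, 1 ≤ j → γ j * η j ≤ α (j - 1) - (1 + σ) * α j + γ j * δ)
    (k : ℕ) (hk : 1 ≤ k)
    (hbig : (0 < σ ∧
        min ((1 + σ) / σ * Real.log (σ * α 0 / (γl * δ) + 1)) (α 0 / (γl * δ)) ≤ (k : ℝ))
      ∨ (σ = 0 ∧ α 0 / (γl * δ) ≤ (k : ℝ))) :
    ∃ j, 1 ≤ j ∧ j ≤ k ∧ η j ≤ 2 * δ := by
  by_contra hcon
  push_neg at hcon
  have hkey : ∀ j, 1 ≤ j → j ≤ k → (1 + σ) * α j + γl * δ < α (j - 1) := by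
    intro j hj hjk
    have hγj := hγ j hj
    have hγpos : 0 < γ j := lt_of_lt_of_le hγl hγj
    have hη := hcon j hj hjk
    have h1 := hrec j hj
    nlinarith [mul_lt_mul_of_pos_left hη hγpos]
  -- linear decrease
  have hlin : ∀ j, 1 ≤ j → j ≤ k → α j + (j : ℝ) * (γl * δ) < α 0 := by
    intro j hj hjk
    induction j with
    | zero => omega
    | succ n ih =>
      rcases Nat.lt_or_ge n 1 with h1 | h1
      · have hn : n = 0 := by omega
        subst hn
        have h2 := hkey 1 le_rfl hjk
        have hα1 := hα 1
        norm_num at h2 ⊢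
        nlinarith
      · have ihh := ih h1 (by omega)
        have h2 := hkey (n + 1) (by omega) hjk
        simp only [Nat.add_sub_cancel] at h2
        have hαn1 := hα (n + 1)
        push_cast
        nlinarith
  rcases hbig with ⟨hσpos, hmin⟩ | ⟨hσ0, hlink⟩
  · rcases min_le_iff.mp hmin with hL | hlink
    · -- geometric case
      set β := γl * δ / σ with hβ
      have hβpos : 0 < β := by positivity
      have hσβ : σ * β = γl * δ := by
        rw [hβ]; field_simp [hσpos.ne']
      have hgeo : ∀ j, 1 ≤ j → j ≤ k → (α j + β) * (1 + σ) ^ j < α 0 + β := by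
        intro j hj hjk
        induction j with
        | zero => omega
        | succ n ih =>
          rcases Nat.lt_or_ge n 1 with h1 | h1
          · have hn : n = 0 := by omega
            subst hn
            have h2 := hkey 1 le_rfl hjk
            norm_num at h2 ⊢
            nlinarith
          · have ihh := ih h1 (by omega)
            have h2 := hkey (n + 1) (by omega) hjk
            simp only [Nat.add_sub_cancel] at h2
            have hpow : (0:ℝ) < (1 + σ) ^ n := by positivity
            have hstep : (1 + σ) * (α (n + 1) + β) < α n + β := by nlinarith
            calc (α (n + 1) + β) * (1 + σ) ^ (n + 1)
                = ((1 + σ) * (α (n + 1) + β)) * (1 + σ) ^ n := by ring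
              _ < (α n + β) * (1 + σ) ^ n := by
                  exact mul_lt_mul_of_pos_right hstep hpow
              _ < α 0 + β := ihh
      have hgk := hgeo k hk le_rfl
      have hpowk : (0:ℝ) < (1 + σ) ^ k := by positivity
      have hαk := hα k
      have hupper : β * (1 + σ) ^ k < α 0 + β := by nlinarith
      -- lower bound from the log condition
      have harg : (1:ℝ) ≤ σ * α 0 / (γl * δ) + 1 := by
        have : (0:ℝ) ≤ σ * α 0 / (γl * δ) :=
          div_nonneg (mul_nonneg hσ (hα 0)) (by positivity)
        linarith
      have hargpos : (0:ℝ) < σ * α 0 / (γl * δ) + 1 := by linarith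
      set L := Real.log (σ * α 0 / (γl * δ) + 1) with hLdef
      have hLnn : 0 ≤ L := Real.log_nonneg harg
      have hlog15 : σ / (1 + σ) ≤ Real.log (1 + σ) := by
        have h1σ : (0:ℝ) < 1 + σ := by linarith
        have := Real.log_le_sub_one_of_pos (x := (1 + σ)⁻¹) (inv_pos.mpr h1σ)
        rw [Real.log_inv] at this
        have heq : (1 + σ)⁻¹ - 1 = -(σ / (1 + σ)) := by field_simp; ring
        linarith [heq ▸ this]
      have hkL : L ≤ (k : ℝ) * (σ / (1 + σ)) := by
        have h1σ : (0:ℝ) < 1 + σ := by linarith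
        have hpos : (0:ℝ) < σ / (1 + σ) := by positivity
        have := mul_le_mul_of_nonneg_right hL (le_of_lt hpos)
        calc L = ((1 + σ) / σ * L) * (σ / (1 + σ)) := by
              field_simp
          _ ≤ (k : ℝ) * (σ / (1 + σ)) := this
      have hexp : σ * α 0 / (γl * δ) + 1 ≤ (1 + σ) ^ k := by
        have h1σ : (0:ℝ) < 1 + σ := by linarith
        have h1 : (k : ℝ) * (σ / (1 + σ)) ≤ (k : ℝ) * Real.log (1 + σ) := by
          have : (0:ℝ) ≤ (k : ℝ) := Nat.cast_nonneg k
          exact mul_le_mul_of_nonneg_left hlog15 this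
        have h2 : L ≤ (k : ℝ) * Real.log (1 + σ) := le_trans hkL h1
        have h3 := Real.exp_le_exp.mpr h2
        rw [Real.exp_log hargpos] at h3
        rwa [Real.exp_nat_mul, Real.exp_log h1σ] at h3
      -- combine
      have hfinal : (1 + σ) ^ k < σ * α 0 / (γl * δ) + 1 := by
        have h2 : α 0 + β = (σ * α 0 / (γl * δ) + 1) * β := by
          field_simp [hβ]
          linear_combination (-α 0) * hσβ
        rw [h2] at hupper
        have h3 : (1 + σ) ^ k * β < (σ * α 0 / (γl * δ) + 1) * β := by linarith
        exact lt_of_mul_lt_mul_right h3 hβpos.le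
      linarith
    · -- linear subcase of σ > 0
      have h := hlin k hk le_rfl
      have hαk := hα k
      have hk2 : α 0 ≤ (k : ℝ) * (γl * δ) := by
        have hpos : (0:ℝ) < γl * δ := by positivity
        exact (div_le_iff₀ hpos).mp hlink
      linarith
  · -- linear case, σ = 0
    have h := hlin k hk le_rfl
    have hαk := hα k
    have hk2 : α 0 ≤ (k : ℝ) * (γl * δ) := by
      have hpos : (0:ℝ) < γl * δ := by positivity
      exact (div_le_iff₀ hpos).mp hlink
    linarith
end

section
/- Let χ ∈ [0,1), λ > 0, μ > 0, ν ∈ [0, μ], and σ := λ[ν(1+μλ) + χ(μ−ν)] / (1 + μλ + χλ(ν−μ)). Then: (i) if χ > 0, then σ > 0 and (1+σ)/σ ≤ (1/χ)(1 + 1/(λμ)); and (ii) if ν > 0, then σ > 0 and (1+σ)/σ ≤ 1 + 1/(λν). -/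
/-- Lemma `lem:sigma`(c): upper bounds on `(1+σ)/σ` for
`σ = λ[ν(1+μλ) + χ(μ−ν)] / (1 + μλ + χλ(ν−μ))`. -/
theorem sigma_ratio_bounds
    (χ lam μ ν σ : ℝ) (hχ0 : 0 ≤ χ) (hχ1 : χ < 1) (hlam : 0 < lam)
    (hμ : 0 < μ) (hν0 : 0 ≤ ν) (hνμ : ν ≤ μ)
    (hσ : σ = lam * (ν * (1 + μ * lam) + χ * (μ - ν)) / (1 + μ * lam + χ * lam * (ν - μ))) :
    (0 < χ → 0 < σ ∧ (1 + σ) / σ ≤ 1 / χ * (1 + 1 / (lam * μ))) ∧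
    (0 < ν → 0 < σ ∧ (1 + σ) / σ ≤ 1 + 1 / (lam * ν)) := by
  have hD : 0 < 1 + μ * lam + χ * lam * (ν - μ) := by
    nlinarith [mul_nonneg (mul_nonneg (sub_nonneg.2 hχ1.le) hlam.le) (sub_nonneg.2 hνμ),
      mul_nonneg hlam.le hν0]
  constructor
  · intro hχ
    have hN : 0 < lam * (ν * (1 + μ * lam) + χ * (μ - ν)) := by
      apply mul_pos hlam
      nlinarith [mul_nonneg (sub_nonneg.2 hχ1.le) hν0,
        mul_nonneg hν0 (mul_pos hμ hlam).le, mul_pos hχ hμ]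
    have hσpos : 0 < σ := hσ ▸ div_pos hN hD
    refine ⟨hσpos, ?_⟩
    rw [div_le_iff₀ hσpos, hσ]
    have h1 : χ ≠ 0 := hχ.ne'
    have h2 : lam * μ ≠ 0 := (mul_pos hlam hμ).ne'
    field_simp
    rw [le_div_iff₀ (by linarith), mul_assoc, add_mul, div_mul_cancel₀ _ (by linarith)]
    nlinarith [mul_nonneg (mul_nonneg (mul_nonneg (mul_nonneg
        (mul_nonneg hlam.le (by positivity : (0:ℝ) ≤ 1 + lam * μ)) hν0)
        (by positivity : (0:ℝ) ≤ 1 + μ * lam)) (sub_nonneg.2 hχ1.le)) hD.le,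
        mul_nonneg (mul_nonneg hν0 (sq_nonneg (1 + lam * μ))) (sub_nonneg.2 hχ1.le)]
  · intro hν
    have hN : 0 < lam * (ν * (1 + μ * lam) + χ * (μ - ν)) := by
      apply mul_pos hlam
      nlinarith [mul_nonneg hχ0 (sub_nonneg.2 hνμ), mul_pos hν (by positivity : (0:ℝ) < 1 + μ * lam)]
    have hσpos : 0 < σ := hσ ▸ div_pos hN hD
    refine ⟨hσpos, ?_⟩
    rw [div_le_iff₀ hσpos, hσ]
    have h2 : lam * ν ≠ 0 := (mul_pos hlam hν).ne'
    field_simp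
    rw [le_div_iff₀ (by linarith), mul_assoc, add_mul, div_mul_cancel₀ _ (by linarith)]
    nlinarith [mul_nonneg (mul_nonneg (mul_nonneg hD.le
        (by positivity : (0:ℝ) ≤ lam * ν + 1))
        (mul_nonneg hlam.le hχ0)) (sub_nonneg.2 hνμ),
        mul_nonneg (mul_nonneg hχ0 (sub_nonneg.2 hνμ)) (by positivity : (0:ℝ) ≤ lam * ν + 1)]
end

section
/- Suppose a single bundle update is performed from iteration j to j+1; that is, there exists a proper lower semicontinuous convex function f̄_j ≤ f with f̄_j(x_j) = f_j(x_j), such that x_j minimizes u ↦ f̄_j(u) + h(u) + ‖u − x̂‖²/(2λ) and max{f̄_j(u), ℓ_f(u; x_j)} ≤ f_{j+1}(u) ≤ f(u) for all u, and x_{j+1} minimizes u ↦ f_{j+1}(u) + h(u) + ‖u − x̂‖²/(2λ). Define m_ℓ := (f_ℓ + h)(x_ℓ) + ‖x_ℓ − x̂‖²/(2λ) for ℓ ∈ {j, j+1}. Then m_{j+1} − τ·m_j ≥ (1−τ)[φ(x_{j+1}) + ‖x_{j+1} − x̂‖²/(2λ)] − (1−τ)(1−χ)ε̄/4. -/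
open scoped RealInnerProductSpace


lemma combo_norm_sq {n : ℕ} (A B : EuclideanSpace ℝ (Fin n)) (t : ℝ) :
    ‖(1-t) • A + t • B‖ ^ 2
      = (1-t) * ‖A‖ ^ 2 + t * ‖B‖ ^ 2 - t * (1-t) * ‖A - B‖ ^ 2 := by
  have h1 : ∀ x : EuclideanSpace ℝ (Fin n), ‖x‖ ^ 2 = ⟪x, x⟫ :=
    fun x => (real_inner_self_eq_norm_sq x).symm
  rw [h1, h1, h1, h1]
  simp only [inner_add_left, inner_add_right, inner_sub_left, inner_sub_right,
    inner_smul_left, inner_smul_right, RCLike.conj_to_real, real_inner_comm B A]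
  ring

set_option maxHeartbeats 1600000 in
/-- Lemma `lem:mj`: the recursive lower bound on the optimal values
`m_ℓ = (f_ℓ + h)(x_ℓ) + ‖x_ℓ − x̂‖²/(2λ)` of consecutive prox bundle subproblems related by
a single bundle update. -/
theorem upb_bundle_update_recursion
    {n : ℕ} (f h : EuclideanSpace ℝ (Fin n) → ℝ)
    (domf domh : Set (EuclideanSpace ℝ (Fin n)))
    (f' : EuclideanSpace ℝ (Fin n) → EuclideanSpace ℝ (Fin n))
    (Mf Lf : ℝ) (hMf : 0 ≤ Mf) (hLf : 0 ≤ Lf)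
    (hsub : domh ⊆ domf)
    (hfconv : ConvexOn ℝ domf f) (hhconv : ConvexOn ℝ domh h)
    (hflsc : LowerSemicontinuousOn f domf) (hhlsc : LowerSemicontinuousOn h domh)
    (horacle : ∀ x ∈ domh, ∀ u ∈ domf, f x + ⟪f' x, u - x⟫ ≤ f u)
    (hhybrid : ∀ x ∈ domh, ∀ y ∈ domh, ‖f' x - f' y‖ ≤ 2 * Mf + Lf * ‖x - y‖)
    (χ ε lam : ℝ) (hχ0 : 0 ≤ χ) (hχ1 : χ < 1) (hε : 0 < ε) (hlam : 0 < lam)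
    (xhat : EuclideanSpace ℝ (Fin n)) (hxhat : xhat ∈ domh)
    -- the two consecutive models and iterates
    (Fj Fj1 : EuclideanSpace ℝ (Fin n) → ℝ)
    (hFjconv : ConvexOn ℝ domf Fj) (hFj1conv : ConvexOn ℝ domf Fj1)
    (hFjle : ∀ u ∈ domf, Fj u ≤ f u) (hFj1le : ∀ u ∈ domf, Fj1 u ≤ f u)
    (xj xj1 : EuclideanSpace ℝ (Fin n)) (hxj : xj ∈ domh) (hxj1 : xj1 ∈ domh)
    -- the bundle update from `j` to `j+1`
    (fbar : EuclideanSpace ℝ (Fin n) → ℝ)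
    (hfbarconv : ConvexOn ℝ domf fbar)
    (hfbarle : ∀ u ∈ domf, fbar u ≤ f u)
    (hfbareq : fbar xj = Fj xj)
    (hfbarmin : ∀ u ∈ domh,
      fbar xj + h xj + ‖xj - xhat‖ ^ 2 / (2 * lam)
        ≤ fbar u + h u + ‖u - xhat‖ ^ 2 / (2 * lam))
    (hFj1low1 : ∀ u ∈ domf, fbar u ≤ Fj1 u)
    (hFj1low2 : ∀ u ∈ domf, f xj + ⟪f' xj, u - xj⟫ ≤ Fj1 u)
    (hxj1min : ∀ u ∈ domh,
      Fj1 xj1 + h xj1 + ‖xj1 - xhat‖ ^ 2 / (2 * lam)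
        ≤ Fj1 u + h u + ‖u - xhat‖ ^ 2 / (2 * lam))
    (ulam τ mj mj1 : ℝ)
    (hulam : ulam = 4 * lam * (2 * Mf ^ 2 + (1 - χ) * ε * Lf) / ((1 - χ) * ε))
    (hτ : τ = ulam / (1 + ulam))
    (hmj : mj = Fj xj + h xj + ‖xj - xhat‖ ^ 2 / (2 * lam))
    (hmj1 : mj1 = Fj1 xj1 + h xj1 + ‖xj1 - xhat‖ ^ 2 / (2 * lam)) :
    (1 - τ) * (f xj1 + h xj1 + ‖xj1 - xhat‖ ^ 2 / (2 * lam)) - (1 - τ) * (1 - χ) * ε / 4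
      ≤ mj1 - τ * mj := by

  have hxjf := hsub hxj
  have hxj1f := hsub hxj1
  set s : ℝ := ‖xj1 - xj‖ with hs
  have hs0 : 0 ≤ s := norm_nonneg _
  set δ : ℝ := (1 - χ) * ε with hδdef
  have hδ : 0 < δ := mul_pos (by linarith) hε
  -- basic facts about ulam and τ
  have hu0 : 0 ≤ ulam := by
    rw [hulam]
    apply div_nonneg _ hδ.le
    nlinarith [mul_nonneg hδ.le hLf, sq_nonneg Mf, hlam.le,
      mul_nonneg hlam.le (mul_nonneg hδ.le hLf), mul_nonneg hlam.le (sq_nonneg Mf)]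
  have h1u : 0 < 1 + ulam := by linarith
  have hτval : τ * (1 + ulam) = ulam := by
    rw [hτ]; field_simp
  have h1τ : 1 - τ = 1 / (1 + ulam) := by
    rw [hτ]; field_simp; ring
  have hτ0 : 0 ≤ τ := by rw [hτ]; positivity
  have hτ1 : 1 - τ > 0 := by rw [h1τ]; positivity
  -- Step 1: strong convexity of the fbar subproblem
  have hQ : fbar xj + h xj + ‖xj - xhat‖ ^ 2 / (2 * lam) + ‖xj - xj1‖ ^ 2 / (2 * lam)
      ≤ fbar xj1 + h xj1 + ‖xj1 - xhat‖ ^ 2 / (2 * lam) := by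
    set c : ℝ := ‖xj - xj1‖ ^ 2 / (2 * lam) with hc
    have hc0 : 0 ≤ c := by positivity
    have key : ∀ t : ℝ, 0 < t → t ≤ 1 →
        fbar xj + h xj + ‖xj - xhat‖ ^ 2 / (2 * lam) + (1 - t) * c
          ≤ fbar xj1 + h xj1 + ‖xj1 - xhat‖ ^ 2 / (2 * lam) := by
      intro t ht0 ht1
      have ht0' : 0 ≤ 1 - t := by linarith
      have hxt : (1 - t) • xj + t • xj1 ∈ domh :=
        hhconv.1 hxj hxj1 ht0' ht0.le (by ring)
      have hmin := hfbarmin _ hxt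
      have hfb : fbar ((1 - t) • xj + t • xj1) ≤ (1 - t) * fbar xj + t * fbar xj1 :=
        hfbarconv.2 hxjf hxj1f ht0' ht0.le (by ring)
      have hh : h ((1 - t) • xj + t • xj1) ≤ (1 - t) * h xj + t * h xj1 :=
        hhconv.2 hxj hxj1 ht0' ht0.le (by ring)
      have hnorm : ‖(1 - t) • xj + t • xj1 - xhat‖ ^ 2
          = (1 - t) * ‖xj - xhat‖ ^ 2 + t * ‖xj1 - xhat‖ ^ 2
            - t * (1 - t) * ‖xj - xj1‖ ^ 2 := by
        have e : (1 - t) • xj + t • xj1 - xhat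
            = (1 - t) • (xj - xhat) + t • (xj1 - xhat) := by
          module
        rw [e, combo_norm_sq]
        have : xj - xhat - (xj1 - xhat) = xj - xj1 := by abel
        rw [this]
      -- combine
      have h2lam : (0:ℝ) < 2 * lam := by linarith
      rw [hnorm] at hmin
      have : t * (fbar xj + h xj + ‖xj - xhat‖ ^ 2 / (2 * lam) + (1 - t) * c)
          ≤ t * (fbar xj1 + h xj1 + ‖xj1 - xhat‖ ^ 2 / (2 * lam)) := by
        have hexp : ((1 - t) * ‖xj - xhat‖ ^ 2 + t * ‖xj1 - xhat‖ ^ 2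
            - t * (1 - t) * ‖xj - xj1‖ ^ 2) / (2 * lam)
            = (1 - t) * (‖xj - xhat‖ ^ 2 / (2 * lam)) + t * (‖xj1 - xhat‖ ^ 2 / (2 * lam))
              - t * (1 - t) * c := by
          rw [hc]; field_simp
        rw [hexp] at hmin
        nlinarith [hmin, hfb, hh]
      exact le_of_mul_le_mul_left (by linarith [this]) ht0
    -- take the limit t → 0
    have goal' : fbar xj + h xj + ‖xj - xhat‖ ^ 2 / (2 * lam) + c
        ≤ fbar xj1 + h xj1 + ‖xj1 - xhat‖ ^ 2 / (2 * lam) := by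
      apply le_of_forall_pos_le_add
      intro ε' hε'
      rcases le_or_gt c ε' with hcle | hcgt
      · have := key 1 one_pos le_rfl
        simp at this
        linarith
      · have hcpos : 0 < c := lt_trans hε' hcgt
        have ht0 : 0 < ε' / c := div_pos hε' hcpos
        have ht1 : ε' / c ≤ 1 := by
          rw [div_le_one hcpos]; linarith
        have := key (ε' / c) ht0 ht1
        have heq : (1 - ε' / c) * c = c - ε' := by
          field_simp
        linarith [this, heq.symm.le]
    exact goal'
  -- Step 2: descent-type bound on f xj1
  have hdescent : f xj1 ≤ f xj + ⟪f' xj, xj1 - xj⟫ + 2 * Mf * s + Lf * s ^ 2 := by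
    have h1 := horacle xj1 hxj1 xj hxjf
    have h2 : ⟪f' xj1, xj - xj1⟫ = - ⟪f' xj1, xj1 - xj⟫ := by
      have : xj - xj1 = -(xj1 - xj) := by abel
      rw [this, inner_neg_right]
    rw [h2] at h1
    have h3 : ⟪f' xj1, xj1 - xj⟫ - ⟪f' xj, xj1 - xj⟫ = ⟪f' xj1 - f' xj, xj1 - xj⟫ := by
      rw [inner_sub_left]
    have h4 : ⟪f' xj1 - f' xj, xj1 - xj⟫ ≤ ‖f' xj1 - f' xj‖ * ‖xj1 - xj‖ :=
      real_inner_le_norm _ _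
    have h5 : ‖f' xj1 - f' xj‖ * ‖xj1 - xj‖ ≤ (2 * Mf + Lf * ‖xj1 - xj‖) * ‖xj1 - xj‖ :=
      mul_le_mul_of_nonneg_right (hhybrid xj1 hxj1 xj hxj) (norm_nonneg _)
    have : (2 * Mf + Lf * ‖xj1 - xj‖) * ‖xj1 - xj‖ = 2 * Mf * s + Lf * s ^ 2 := by
      rw [← hs]; ring
    nlinarith [h1, h3, h4, h5]
  -- Step 3: two lower bounds on mj1
  have hA : mj + s ^ 2 / (2 * lam) ≤ mj1 := by
    have h1 := hFj1low1 xj1 hxj1f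
    have hnr : ‖xj - xj1‖ = s := by rw [hs, norm_sub_rev]
    rw [hmj1, hmj, ← hfbareq]
    rw [hnr] at hQ
    linarith
  have hB : f xj1 + h xj1 + ‖xj1 - xhat‖ ^ 2 / (2 * lam) - 2 * Mf * s - Lf * s ^ 2 ≤ mj1 := by
    have h1 := hFj1low2 xj1 hxj1f
    rw [hmj1]
    linarith
  -- Step 4: the scalar inequality
  have hscalar : (1 - τ) * (2 * Mf * s + Lf * s ^ 2) - τ * (s ^ 2 / (2 * lam))
      ≤ (1 - τ) * δ / 4 := by
    have hulamδ : ulam * δ = 4 * lam * (2 * Mf ^ 2 + δ * Lf) := by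
      rw [hulam, hδdef]
      field_simp
      exact mul_div_cancel_left₀ _ (by linarith : (1 - χ) ≠ 0)
    have hkey : (2 * Mf * s + Lf * s ^ 2) * δ - ulam * (s ^ 2 / (2 * lam)) * δ ≤ δ * δ / 4 := by
      have hulams : ulam * (s ^ 2 / (2 * lam)) * δ = 2 * (2 * Mf ^ 2 + δ * Lf) * s ^ 2 := by
        rw [mul_comm (ulam) _, mul_assoc, hulamδ]
        field_simp
        ring
      rw [hulams]
      nlinarith [sq_nonneg (2 * Mf * s - δ / 2), mul_nonneg (mul_nonneg hδ.le hLf) (sq_nonneg s)]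
    have hXq : (2 * Mf * s + Lf * s ^ 2) - ulam * (s ^ 2 / (2 * lam)) ≤ δ / 4 := by
      nlinarith [hkey, hδ]
    have h1τu : (1 - τ) * (1 + ulam) = 1 := by
      rw [h1τ]; field_simp
    have hτu : τ = (1 - τ) * ulam := by nlinarith [hτval, h1τu]
    have hτuq : τ * (s ^ 2 / (2 * lam)) = (1 - τ) * (ulam * (s ^ 2 / (2 * lam))) := by
      linear_combination (s ^ 2 / (2 * lam)) * hτu
    have h1 : (1 - τ) * ((2 * Mf * s + Lf * s ^ 2) - ulam * (s ^ 2 / (2 * lam)))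
        ≤ (1 - τ) * (δ / 4) := mul_le_mul_of_nonneg_left hXq hτ1.le
    nlinarith [h1, hτuq]
  -- Step 5: combine
  have hcomb : τ * (mj + s ^ 2 / (2 * lam))
      + (1 - τ) * (f xj1 + h xj1 + ‖xj1 - xhat‖ ^ 2 / (2 * lam) - 2 * Mf * s - Lf * s ^ 2)
      ≤ mj1 := by
    nlinarith [mul_le_mul_of_nonneg_left hA hτ0, mul_le_mul_of_nonneg_left hB hτ1.le]
  have hτs : 0 ≤ τ * (s ^ 2 / (2 * lam)) := by positivity
  have hfinal : (1 - τ) * δ = (1 - τ) * (1 - χ) * ε := by rw [hδdef]; ring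
  nlinarith [hcomb, hscalar]
end

section
/- Under the cycle hypotheses (prox subproblem minimizers, recursively defined values φ̄_ℓ, and bundle updates between all consecutive iterations ℓ = i, …, j−1), one has t_j − (1−χ)ε̄/4 ≤ τ^{j−i} · (t_i − (1−χ)ε̄/4). -/
open scoped RealInnerProductSpace

lemma upb_combo_norm {E : Type*} [NormedAddCommGroup E] [InnerProductSpace ℝ E]
    (θ : ℝ) (p q : E) :
    ‖(1 - θ) • p + θ • q‖ ^ 2
      = (1 - θ) * ‖p‖ ^ 2 + θ * ‖q‖ ^ 2 - θ * (1 - θ) * ‖p - q‖ ^ 2 := by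
  simp only [← real_inner_self_eq_norm_sq, inner_add_left, inner_add_right,
    inner_sub_left, inner_sub_right, real_inner_smul_left, real_inner_smul_right]
  rw [real_inner_comm q p]
  ring

lemma upb_strong_min {n : ℕ} {s : Set (EuclideanSpace ℝ (Fin n))}
    {g : EuclideanSpace ℝ (Fin n) → ℝ} (hg : ConvexOn ℝ s g)
    {lam : ℝ} (hlam : 0 < lam) {xhat xm : EuclideanSpace ℝ (Fin n)}
    (hxm : xm ∈ s)
    (hmin : ∀ u ∈ s, g xm + ‖xm - xhat‖ ^ 2 / (2 * lam)
      ≤ g u + ‖u - xhat‖ ^ 2 / (2 * lam)) :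
    ∀ y ∈ s, g xm + ‖xm - xhat‖ ^ 2 / (2 * lam) + ‖y - xm‖ ^ 2 / (2 * lam)
      ≤ g y + ‖y - xhat‖ ^ 2 / (2 * lam) := by
  intro y hy
  set c : ℝ := ‖y - xm‖ ^ 2 / (2 * lam) with hc
  have hc0 : 0 ≤ c := by positivity
  have key : ∀ θ : ℝ, 0 < θ → θ ≤ 1/2 →
      g xm + ‖xm - xhat‖ ^ 2 / (2 * lam) + (1 - θ) * c
        ≤ g y + ‖y - xhat‖ ^ 2 / (2 * lam) := by
    intro θ hθ0 hθ1
    have hz : (1 - θ) • xm + θ • y ∈ s := hg.1 hxm hy (by linarith) hθ0.le (by ring)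
    have hcvx : g ((1 - θ) • xm + θ • y) ≤ (1 - θ) * g xm + θ * g y :=
      hg.2 hxm hy (by linarith) hθ0.le (by ring)
    have hq : ‖((1 - θ) • xm + θ • y) - xhat‖ ^ 2
        = (1 - θ) * ‖xm - xhat‖ ^ 2 + θ * ‖y - xhat‖ ^ 2
          - θ * (1 - θ) * ‖y - xm‖ ^ 2 := by
      have e : ((1 - θ) • xm + θ • y) - xhat
          = (1 - θ) • (xm - xhat) + θ • (y - xhat) := by module
      rw [e, upb_combo_norm, show (xm - xhat) - (y - xhat) = xm - y by abel,
        norm_sub_rev xm y]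
    have hm := hmin _ hz
    rw [hq] at hm
    have e2 : ((1 - θ) * ‖xm - xhat‖ ^ 2 + θ * ‖y - xhat‖ ^ 2
          - θ * (1 - θ) * ‖y - xm‖ ^ 2) / (2 * lam)
        = (1 - θ) * (‖xm - xhat‖ ^ 2 / (2 * lam))
          + θ * (‖y - xhat‖ ^ 2 / (2 * lam)) - θ * ((1 - θ) * c) := by
      rw [hc]; field_simp
    rw [e2] at hm
    have h3 : θ * (g xm + ‖xm - xhat‖ ^ 2 / (2 * lam) + (1 - θ) * c)
        ≤ θ * (g y + ‖y - xhat‖ ^ 2 / (2 * lam)) := by nlinarith [hm, hcvx]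
    exact le_of_mul_le_mul_left h3 hθ0
  rw [← sub_nonneg]
  by_contra hneg
  push_neg at hneg
  set D : ℝ := g y + ‖y - xhat‖ ^ 2 / (2 * lam)
      - (g xm + ‖xm - xhat‖ ^ 2 / (2 * lam) + c) with hD
  have hD0 : D < 0 := hneg
  have hθ : (0:ℝ) < min (1/2) (-D / (c + 1)) :=
    lt_min (by norm_num) (div_pos (by linarith) (by linarith))
  have hkey := key _ hθ (min_le_left _ _)
  have hub : -D ≤ min (1/2) (-D / (c + 1)) * c := by
    rw [show (1 - min (1/2) (-D / (c + 1))) * c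
        = c - min (1/2) (-D / (c + 1)) * c by ring] at hkey
    rw [hD]; linarith
  have hstrict : min (1/2) (-D / (c + 1)) * c < -D := by
    calc min (1/2) (-D / (c + 1)) * c ≤ (-D / (c + 1)) * c :=
          mul_le_mul_of_nonneg_right (min_le_right _ _) hc0
      _ < -D := by
          rw [div_mul_eq_mul_div, div_lt_iff₀ (by linarith)]
          nlinarith
  linarith


set_option maxHeartbeats 1600000 in
/-- Lemma `lembdj`: within a cycle of U-PB with stepsize `lam`,
prox-center `xhat` and first iteration `i`, the gaps satisfy the contraction
`t_j − (1−χ)ε̄/4 ≤ τ^{j−i}(t_i − (1−χ)ε̄/4)`. -/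
theorem upb_gap_contraction
    {n : ℕ} (f h : EuclideanSpace ℝ (Fin n) → ℝ)
    (domf domh : Set (EuclideanSpace ℝ (Fin n)))
    (f' : EuclideanSpace ℝ (Fin n) → EuclideanSpace ℝ (Fin n))
    (Mf Lf : ℝ) (hMf : 0 ≤ Mf) (hLf : 0 ≤ Lf)
    (hsub : domh ⊆ domf)
    (hfconv : ConvexOn ℝ domf f) (hhconv : ConvexOn ℝ domh h)
    (hflsc : LowerSemicontinuousOn f domf) (hhlsc : LowerSemicontinuousOn h domh)
    (horacle : ∀ x ∈ domh, ∀ u ∈ domf, f x + ⟪f' x, u - x⟫ ≤ f u)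
    (hhybrid : ∀ x ∈ domh, ∀ y ∈ domh, ‖f' x - f' y‖ ≤ 2 * Mf + Lf * ‖x - y‖)
    (χ ε lam : ℝ) (hχ0 : 0 ≤ χ) (hχ1 : χ < 1) (hε : 0 < ε) (hlam : 0 < lam)
    (xhat : EuclideanSpace ℝ (Fin n)) (hxhat : xhat ∈ domh)
    (i j : ℕ) (hij : i ≤ j)
    -- the iterations of the cycle
    (F : ℕ → EuclideanSpace ℝ (Fin n) → ℝ)
    (x : ℕ → EuclideanSpace ℝ (Fin n)) (φb t : ℕ → ℝ)
    (hFconv : ∀ l, i ≤ l → l ≤ j → ConvexOn ℝ domf (F l))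
    (hFle : ∀ l, i ≤ l → l ≤ j → ∀ u ∈ domf, F l u ≤ f u)
    (hxdom : ∀ l, i ≤ l → l ≤ j → x l ∈ domh)
    (hxmin : ∀ l, i ≤ l → l ≤ j → ∀ u ∈ domh,
      F l (x l) + h (x l) + ‖x l - xhat‖ ^ 2 / (2 * lam)
        ≤ F l u + h u + ‖u - xhat‖ ^ 2 / (2 * lam))
    (hφbi : φb i = f (x i) + h (x i) + χ / (2 * lam) * ‖x i - xhat‖ ^ 2)
    (hφbrec : ∀ l, i ≤ l → l < j →
      φb (l + 1) = min (φb l)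
        (f (x (l + 1)) + h (x (l + 1)) + χ / (2 * lam) * ‖x (l + 1) - xhat‖ ^ 2))
    (ht : ∀ l, i ≤ l → l ≤ j →
      t l = φb l - (F l (x l) + h (x l) + ‖x l - xhat‖ ^ 2 / (2 * lam)))
    (hbundle : ∀ l, i ≤ l → l < j →
      ∃ fbar : EuclideanSpace ℝ (Fin n) → ℝ,
        ConvexOn ℝ domf fbar ∧ (∀ u ∈ domf, fbar u ≤ f u) ∧
        fbar (x l) = F l (x l) ∧
        (∀ u ∈ domh, fbar (x l) + h (x l) + ‖x l - xhat‖ ^ 2 / (2 * lam)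
          ≤ fbar u + h u + ‖u - xhat‖ ^ 2 / (2 * lam)) ∧
        (∀ u ∈ domf, fbar u ≤ F (l + 1) u) ∧
        (∀ u ∈ domf, f (x l) + ⟪f' (x l), u - x l⟫ ≤ F (l + 1) u))
    (ulam τ : ℝ)
    (hulam : ulam = 4 * lam * (2 * Mf ^ 2 + (1 - χ) * ε * Lf) / ((1 - χ) * ε))
    (hτ : τ = ulam / (1 + ulam)) :
    t j - (1 - χ) * ε / 4 ≤ τ ^ (j - i) * (t i - (1 - χ) * ε / 4) := by
  obtain ⟨a, ha⟩ : ∃ a : ℝ, a = (1 - χ) * ε / 4 := ⟨_, rfl⟩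
  rw [show (1 - χ) * ε / 4 = a from ha.symm]
  have h1χ : (0:ℝ) < 1 - χ := by linarith
  have ha0 : 0 < a := by rw [ha]; apply div_pos (mul_pos h1χ hε) (by norm_num)
  have hdomhc : Convex ℝ domh := hhconv.1
  have h4a : (1 - χ) * ε = 4 * a := by rw [ha]; ring
  have hu0 : 0 ≤ ulam := by
    rw [hulam]
    apply div_nonneg _ (mul_pos h1χ hε).le
    have : 0 ≤ (1 - χ) * ε * Lf := mul_nonneg (mul_pos h1χ hε).le hLf
    nlinarith [sq_nonneg Mf, hlam.le]
  have h1u : (0:ℝ) < 1 + ulam := by linarith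
  have hτ0 : 0 ≤ τ := by rw [hτ]; exact div_nonneg hu0 h1u.le
  have step : ∀ l, i ≤ l → l < j → t (l + 1) - a ≤ τ * (t l - a) := by
    intro l hil hlj
    have hl1j : l + 1 ≤ j := hlj
    have hlj' : l ≤ j := le_of_lt hlj
    obtain ⟨fbar, hbconv, hble, hbeq, hbmin, hbF1, hblin⟩ := hbundle l hil hlj
    have hxl : x l ∈ domh := hxdom l hil hlj'
    have hxl1 : x (l + 1) ∈ domh := hxdom (l + 1) (by omega) hl1j
    have hxlf : x l ∈ domf := hsub hxl
    have hxl1f : x (l + 1) ∈ domf := hsub hxl1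
    obtain ⟨d, hd⟩ : ∃ d : ℝ, d = ‖x (l + 1) - x l‖ := ⟨_, rfl⟩
    have hd0 : 0 ≤ d := by rw [hd]; exact norm_nonneg _
    have hdd : d ^ 2 / (2 * lam) = ‖x (l + 1) - x l‖ ^ 2 / (2 * lam) := by rw [hd]
    have hgconv : ConvexOn ℝ domh (fun u => fbar u + h u) :=
      (hbconv.subset hsub hdomhc).add hhconv
    have hsm := upb_strong_min hgconv hlam hxl hbmin (x (l + 1)) hxl1
    rw [hbeq] at hsm
    have hB1 : t (l + 1) ≤ t l - d ^ 2 / (2 * lam) := by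
      rw [ht l hil hlj', ht (l + 1) (by omega) hl1j]
      have hφ : φb (l + 1) ≤ φb l := by
        rw [hφbrec l hil hlj]; exact min_le_left _ _
      have hF1 : fbar (x (l + 1)) ≤ F (l + 1) (x (l + 1)) := hbF1 _ hxl1f
      linarith [hsm, hφ, hF1, hdd]
    have hB2 : t (l + 1) ≤ 2 * Mf * d + Lf * d ^ 2 := by
      rw [ht (l + 1) (by omega) hl1j]
      have hφ : φb (l + 1)
          ≤ f (x (l + 1)) + h (x (l + 1)) + χ / (2 * lam) * ‖x (l + 1) - xhat‖ ^ 2 := by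
        rw [hφbrec l hil hlj]; exact min_le_right _ _
      have hlin := hblin _ hxl1f
      have hor := horacle _ hxl1 _ hxlf
      have hinner : ⟪f' (x (l + 1)) - f' (x l), x (l + 1) - x l⟫
          ≤ 2 * Mf * d + Lf * d ^ 2 := by
        calc ⟪f' (x (l + 1)) - f' (x l), x (l + 1) - x l⟫
            ≤ ‖f' (x (l + 1)) - f' (x l)‖ * ‖x (l + 1) - x l‖ := real_inner_le_norm _ _
          _ ≤ (2 * Mf + Lf * ‖x (l + 1) - x l‖) * ‖x (l + 1) - x l‖ :=
              mul_le_mul_of_nonneg_right (hhybrid _ hxl1 _ hxl) (norm_nonneg _)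
          _ = 2 * Mf * d + Lf * d ^ 2 := by rw [← hd]; ring
      have hsplit : ⟪f' (x (l + 1)) - f' (x l), x (l + 1) - x l⟫
          = ⟪f' (x (l + 1)), x (l + 1) - x l⟫ - ⟪f' (x l), x (l + 1) - x l⟫ :=
        inner_sub_left _ _ _
      have hflip : ⟪f' (x (l + 1)), x l - x (l + 1)⟫
          = -⟪f' (x (l + 1)), x (l + 1) - x l⟫ := by
        rw [show x l - x (l + 1) = -(x (l + 1) - x l) by abel, inner_neg_right]
      have hχq : χ / (2 * lam) * ‖x (l + 1) - xhat‖ ^ 2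
          ≤ ‖x (l + 1) - xhat‖ ^ 2 / (2 * lam) := by
        rw [div_mul_eq_mul_div, div_le_div_iff₀ (by positivity) (by positivity)]
        nlinarith [mul_nonneg (mul_nonneg h1χ.le (sq_nonneg ‖x (l + 1) - xhat‖))
          (by linarith : (0:ℝ) ≤ 2 * lam)]
      linarith [hφ, hlin, hor, hsplit, hflip, hinner, hχq]
    have e1 : ulam * (d ^ 2 / (2 * lam)) = (2 * Mf ^ 2 + 4 * a * Lf) * d ^ 2 / (2 * a) := by
      rw [hulam, h4a]
      field_simp
    have h2 : 2 * Mf * d + Lf * d ^ 2 ≤ ulam * (d ^ 2 / (2 * lam)) + a := by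
      rw [e1]
      have key2 : (2 * Mf * d + Lf * d ^ 2 - a) * (2 * a) ≤ (2 * Mf ^ 2 + 4 * a * Lf) * d ^ 2 := by
        nlinarith [sq_nonneg (a - Mf * d), mul_nonneg (mul_nonneg ha0.le hLf) (sq_nonneg d)]
      have := (le_div_iff₀ (by positivity : (0:ℝ) < 2 * a)).mpr key2
      linarith
    have hgoal : (1 + ulam) * t (l + 1) ≤ ulam * t l + a := by
      nlinarith [mul_le_mul_of_nonneg_left hB1 hu0, hB2, h2]
    rw [hτ, div_mul_eq_mul_div, le_div_iff₀ h1u]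
    nlinarith [hgoal]
  have main : ∀ l, i ≤ l → l ≤ j → t l - a ≤ τ ^ (l - i) * (t i - a) := by
    intro l hl
    induction l, hl using Nat.le_induction with
    | base => intro _; simp
    | succ m hm ih =>
      intro hmj
      have hmj' : m < j := hmj
      calc t (m + 1) - a ≤ τ * (t m - a) := step m hm hmj'
        _ ≤ τ * (τ ^ (m - i) * (t i - a)) :=
            mul_le_mul_of_nonneg_left (ih (le_of_lt hmj')) hτ0
        _ = τ ^ (m + 1 - i) * (t i - a) := by
            rw [show m + 1 - i = (m - i) + 1 by omega, pow_succ]; ring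
  exact main j hij le_rfl
end
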